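/- arXiv:1611.07453 — 6 statements merged into one kernel-verified Lean document; each statement's English description precedes it below -/
import Mathlib

section
/- Let G be a group with finite generating set S, and let H be a finitely generated infinite normal subgroup of infinite index in G whose finite generating set T is contained in S. Then for every positive integer r and all x, y in G with |x|_S = |y|_S = r, there is a sequence x = g_0, g_1, ..., g_n = y in G with g_j^{-1} g_{j+1} ∈ S ∪ S^{-1} for all j, with |g_j|_S ≥ r/2 for all j, and with n ≤ 4·Dist_G^H(32r) + 12r. (This is the content of the theorem that the divergence of G is dominated by the distortion of H in G, expressed at the level of the Cayley graph of (G,S).) -/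
open Pointwise

/-- The word length of `g` with respect to a set `S` of letters:
the least `n` such that `g` is a product of `n` elements of `S ∪ S⁻¹`. -/
noncomputable def wordLength {G : Type*} [Group G] (S : Set G) (g : G) : ℕ :=
  sInf {n | ∃ l : List G, l.length = n ∧ (∀ x ∈ l, x ∈ S ∨ x⁻¹ ∈ S) ∧ l.prod = g}

/-- The distortion function of a subgroup `H` (with generating set `T`) in a group
generated by `S`: `Dist(r) = max { |h|_T : h ∈ H, |h|_S ≤ r }`. -/
noncomputable def distortion {G : Type*} [Group G] (S T : Set G) (H : Subgroup G)
    (r : ℕ) : ℕ :=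
  sSup {n | ∃ h ∈ H, wordLength S h ≤ r ∧ wordLength T h = n}

/-!
Put `R = ⌈r/2⌉` and fix `q ∈ G ⧸ H` of length `R` for the image of `S`; points of `G` lying over
an element of quotient length at least `R` have `S`-length at least `R`. Starting from `x`, first
walk at most `R` steps to a point whose image has quotient length at least `R` (this exists since
`G ⧸ H` is infinite); then walk inside that coset of `H`, along a `T`-geodesic, out to `S`-length
`10 r`; then cross in at most `2 r + 1` steps to the coset `q`, which the triangle inequality keeps
outside the ball of radius `R`. Do the same from `y`, and join the two endpoints, which lie in the
coset `q`, by a `T`-geodesic: its length is bounded by the distortion, and it stays in the coset.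
-/

theorem Nat.exists_eq_of_map_succ_le_add_one {f : ℕ → ℕ} (hf : ∀ j, f (j + 1) ≤ f j + 1)
    {m N : ℕ} (h0 : f 0 ≤ m) (hN : m ≤ f N) : ∃ j ≤ N, f j = m := by
  induction N with
  | zero => exact ⟨0, le_rfl, le_antisymm h0 hN⟩
  | succ N ih =>
    by_cases hm : m ≤ f N
    · obtain ⟨j, hj, hfj⟩ := ih hm
      exact ⟨j, hj.trans N.le_succ, hfj⟩
    · exact ⟨N + 1, le_rfl, by have := hf N; omega⟩

namespace WordMetric

variable {G : Type*} [Group G]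

def IsWord (S : Set G) (l : List G) : Prop :=
  ∀ x ∈ l, x ∈ S ∨ x⁻¹ ∈ S

def wordInv (l : List G) : List G :=
  (l.map (·⁻¹)).reverse

@[simp]
theorem length_wordInv (l : List G) : (wordInv l).length = l.length := by
  simp [wordInv]

theorem prod_wordInv (l : List G) : (wordInv l).prod = l.prod⁻¹ :=
  (List.prod_inv_reverse l).symm

theorem take_wordInv (l : List G) (j : ℕ) :
    (wordInv l).take j = wordInv (l.drop (l.length - j)) := by
  simp [wordInv, List.take_reverse, List.map_drop]

namespace IsWord

variable {S T : Set G} {l l₁ l₂ : List G}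

theorem append (h₁ : IsWord S l₁) (h₂ : IsWord S l₂) : IsWord S (l₁ ++ l₂) :=
  List.forall_mem_append.mpr ⟨h₁, h₂⟩

theorem take (h : IsWord S l) (n : ℕ) : IsWord S (l.take n) :=
  fun x hx => h x (List.mem_of_mem_take hx)

theorem mono (hST : S ⊆ T) (h : IsWord S l) : IsWord T l :=
  fun x hx => (h x hx).imp (@hST _) (@hST _)

theorem wordInv (h : IsWord S l) : IsWord S (wordInv l) := by
  intro x hx
  obtain ⟨a, ha, rfl⟩ : ∃ a ∈ l, a⁻¹ = x := by simpa [WordMetric.wordInv] using hx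
  simpa [or_comm] using h a ha

theorem prod_mem_closure (h : IsWord S l) : l.prod ∈ Subgroup.closure S :=
  Subgroup.list_prod_mem _ fun x hx => (h x hx).elim (fun hx => Subgroup.subset_closure hx)
    fun hx => (Subgroup.inv_mem_iff _).mp (Subgroup.subset_closure hx)

end IsWord

section WordLength

variable {S : Set G}

theorem wordLength_prod_le {l : List G} (hl : IsWord S l) : wordLength S l.prod ≤ l.length :=
  Nat.sInf_le ⟨l, rfl, hl, rfl⟩

@[simp]
theorem wordLength_one : wordLength S (1 : G) = 0 :=
  Nat.le_zero.mp (wordLength_prod_le (l := []) (by simp [IsWord]))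

theorem wordLength_le_one {a : G} (ha : a ∈ S ∨ a⁻¹ ∈ S) : wordLength S a ≤ 1 := by
  simpa using wordLength_prod_le (S := S) (l := [a]) (by simpa [IsWord])

theorem exists_isWord_prod_eq {g : G} (hg : g ∈ Subgroup.closure S) :
    ∃ l, IsWord S l ∧ l.prod = g := by
  rw [← Subgroup.mem_toSubmonoid, Subgroup.closure_toSubmonoid] at hg
  exact Submonoid.exists_list_of_mem_closure hg

theorem exists_isWord_prod_eq_length_eq {g : G} (hg : g ∈ Subgroup.closure S) :
    ∃ l, IsWord S l ∧ l.prod = g ∧ l.length = wordLength S g := by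
  obtain ⟨l, hl, hlg⟩ := exists_isWord_prod_eq hg
  obtain ⟨l', hlen, hl', hlg'⟩ := Nat.sInf_mem (⟨l.length, l, rfl, hl, hlg⟩ :
    {n | ∃ l : List G, l.length = n ∧ (∀ x ∈ l, x ∈ S ∨ x⁻¹ ∈ S) ∧ l.prod = g}.Nonempty)
  exact ⟨l', hl', hlg', hlen⟩

theorem wordLength_mul_le (hS : Subgroup.closure S = ⊤) (a b : G) :
    wordLength S (a * b) ≤ wordLength S a + wordLength S b := by
  obtain ⟨la, hla, rfl, hlena⟩ := exists_isWord_prod_eq_length_eq (hS ▸ Subgroup.mem_top a)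
  obtain ⟨lb, hlb, rfl, hlenb⟩ := exists_isWord_prod_eq_length_eq (hS ▸ Subgroup.mem_top b)
  simpa [hlena, hlenb] using wordLength_prod_le (hla.append hlb)

theorem wordLength_inv (hS : Subgroup.closure S = ⊤) (a : G) :
    wordLength S a⁻¹ = wordLength S a := by
  have key (b : G) : wordLength S b⁻¹ ≤ wordLength S b := by
    obtain ⟨l, hl, rfl, hlen⟩ := exists_isWord_prod_eq_length_eq (hS ▸ Subgroup.mem_top b)
    simpa [prod_wordInv, hlen] using wordLength_prod_le hl.wordInv
  exact le_antisymm (key a) (by simpa using key a⁻¹)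

theorem wordLength_le_mul_add (hS : Subgroup.closure S = ⊤) (g p : G) :
    wordLength S g ≤ wordLength S (g * p) + wordLength S p := by
  simpa [wordLength_inv hS] using wordLength_mul_le hS (g * p) p⁻¹

theorem wordLength_le_add_mul (hS : Subgroup.closure S = ⊤) (g p : G) :
    wordLength S p ≤ wordLength S g + wordLength S (g * p) := by
  simpa [wordLength_inv hS] using wordLength_mul_le hS g⁻¹ (g * p)

theorem finite_setOf_wordLength_le (hS : Subgroup.closure S = ⊤) (hSfin : S.Finite) (n : ℕ) :
    {g : G | wordLength S g ≤ n}.Finite := by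
  have : Finite ↥(S ∪ S⁻¹) := (hSfin.union hSfin.inv).to_subtype
  refine ((List.finite_length_le _ n).image fun l : List ↥(S ∪ S⁻¹) => (l.map (↑)).prod).subset ?_
  intro g hg
  obtain ⟨l, hl, rfl, hlen⟩ := exists_isWord_prod_eq_length_eq (hS ▸ Subgroup.mem_top g)
  refine ⟨l.attach.map fun x => ⟨x.1, hl x.1 x.2⟩, by simpa [hlen] using hg, ?_⟩
  simp [Function.comp_def]

theorem exists_wordLength_mul_prod_take_eq (hS : Subgroup.closure S = ⊤) {l : List G}
    (hl : IsWord S l) {g : G} {m : ℕ} (h0 : wordLength S g ≤ m)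
    (h1 : m ≤ wordLength S (g * l.prod)) : ∃ j, wordLength S (g * (l.take j).prod) = m := by
  have step (j : ℕ) :
      wordLength S (g * (l.take (j + 1)).prod) ≤ wordLength S (g * (l.take j).prod) + 1 := by
    rcases lt_or_ge j l.length with hj | hj
    · rw [List.take_succ_eq_append_getElem hj, List.prod_append, List.prod_singleton, ← mul_assoc]
      exact (wordLength_mul_le hS _ _).trans
        (Nat.add_le_add_left (wordLength_le_one (hl _ (l.getElem_mem hj))) _)
    · rw [List.take_of_length_le hj, List.take_of_length_le (by omega)]
      omega
  obtain ⟨j, -, hj⟩ := Nat.exists_eq_of_map_succ_le_add_one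
    (f := fun j => wordLength S (g * (l.take j).prod)) step (N := l.length)
    (by simpa using h0) (by simpa using h1)
  exact ⟨j, hj⟩

theorem exists_wordLength_eq [Infinite G] (hS : Subgroup.closure S = ⊤) (hSfin : S.Finite)
    (n : ℕ) : ∃ g : G, wordLength S g = n := by
  obtain ⟨g, hg⟩ := (finite_setOf_wordLength_le hS hSfin n).infinite_compl.nonempty
  obtain ⟨l, hl, rfl⟩ := exists_isWord_prod_eq (hS ▸ Subgroup.mem_top g)
  obtain ⟨j, hj⟩ := exists_wordLength_mul_prod_take_eq hS hl (g := 1) (m := n)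
    (by simp) (by simp at hg ⊢; omega)
  exact ⟨_, by simpa using hj⟩

/-- Left translation by `v` cannot map the closed ball of radius `R` into the open one, which is
strictly smaller because the sphere of radius `R` is nonempty. -/
theorem exists_wordLength_le_le_wordLength_mul [Infinite G] (hS : Subgroup.closure S = ⊤)
    (hSfin : S.Finite) (v : G) (R : ℕ) :
    ∃ u, wordLength S u ≤ R ∧ R ≤ wordLength S (v * u) := by
  by_contra! hcon
  obtain ⟨s, hs⟩ := exists_wordLength_eq hS hSfin R
  have hball := finite_setOf_wordLength_le hS hSfin R
  have hsub : {g : G | wordLength S g < R} ⊂ {g | wordLength S g ≤ R} :=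
    ⟨fun g (hg : wordLength S g < R) => hg.le,
      fun h => (h (hs.le : s ∈ {g | wordLength S g ≤ R})).ne hs⟩
  have hmaps : (v * ·) '' {g : G | wordLength S g ≤ R} ⊆ {g | wordLength S g < R} := by
    rintro _ ⟨u, hu, rfl⟩
    exact hcon u hu
  have := Set.ncard_le_ncard hmaps (hball.subset hsub.1)
  rw [Set.ncard_image_of_injective _ (mul_right_injective v)] at this
  exact (Set.ncard_lt_ncard hsub hball).not_ge this

end WordLength

section Map

variable {B : Type*} [Group B] (f : G →* B) {S T : Set G}

theorem wordLength_map_le {g : G} (hg : g ∈ Subgroup.closure S) :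
    wordLength (f '' S) (f g) ≤ wordLength S g := by
  obtain ⟨l, hl, rfl, hlen⟩ := exists_isWord_prod_eq_length_eq hg
  have hfl : IsWord (f '' S) (l.map f) := by
    simp only [IsWord, List.mem_map, forall_exists_index, and_imp, forall_apply_eq_imp_iff₂]
    exact fun a ha => (hl a ha).imp (Set.mem_image_of_mem f) fun h => ⟨a⁻¹, h, map_inv f a⟩
  simpa [hlen, map_list_prod] using wordLength_prod_le hfl

theorem exists_isWord_map_prod_eq (hfS : Subgroup.closure (f '' S) = ⊤) (b : B) :
    ∃ l, IsWord S l ∧ l.length = wordLength (f '' S) b ∧ f l.prod = b := by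
  obtain ⟨lB, hlB, rfl, hlen⟩ := exists_isWord_prod_eq_length_eq (hfS ▸ Subgroup.mem_top b)
  have hlift : ∀ y ∈ lB, ∃ x, (x ∈ S ∨ x⁻¹ ∈ S) ∧ f x = y := by
    intro y hy
    rcases hlB y hy with ⟨s, hs, rfl⟩ | ⟨s, hs, hsy⟩
    · exact ⟨s, .inl hs, rfl⟩
    · exact ⟨s⁻¹, .inr (by simpa using hs), by rw [map_inv, hsy, inv_inv]⟩
  choose! lift hlift using hlift
  refine ⟨lB.map lift, fun x hx => ?_, by simpa using hlen, ?_⟩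
  · obtain ⟨y, hy, rfl⟩ := List.mem_map.mp hx
    exact (hlift y hy).1
  · rw [map_list_prod, List.map_map]
    exact congrArg List.prod
      ((List.map_congr_left fun y hy => (hlift y hy).2).trans (List.map_id _))

theorem map_prod_eq_one_of_isWord (hTf : T ⊆ f.ker) {l : List G} (hl : IsWord T l) :
    f l.prod = 1 :=
  (Subgroup.closure_le _).mpr hTf hl.prod_mem_closure

theorem closure_image_eq_top (hf : Function.Surjective f) (hS : Subgroup.closure S = ⊤) :
    Subgroup.closure (f '' S) = ⊤ := by
  rw [← MonoidHom.map_closure, hS]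
  exact Subgroup.map_top_of_surjective f hf

end Map

section Distortion

variable {S T : Set G} {H : Subgroup G}

theorem wordLength_le_distortion (hS : Subgroup.closure S = ⊤) (hSfin : S.Finite) {h : G}
    (hh : h ∈ H) {n : ℕ} (hn : wordLength S h ≤ n) : wordLength T h ≤ distortion S T H n := by
  have hfin := (finite_setOf_wordLength_le hS hSfin n).image (wordLength T)
  refine le_csSup (hfin.subset ?_).bddAbove ⟨h, hh, hn, rfl⟩
  rintro _ ⟨k, -, hk, rfl⟩
  exact ⟨k, hk, rfl⟩

theorem exists_isWord_prod_eq_length_le_distortion (hS : Subgroup.closure S = ⊤)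
    (hSfin : S.Finite) (hT : Subgroup.closure T = H) {h : G} (hh : h ∈ H) {n : ℕ}
    (hn : wordLength S h ≤ n) : ∃ l, IsWord T l ∧ l.prod = h ∧ l.length ≤ distortion S T H n := by
  obtain ⟨l, hl, rfl, hlen⟩ := exists_isWord_prod_eq_length_eq (hT ▸ hh)
  exact ⟨l, hl, rfl, hlen ▸ wordLength_le_distortion hS hSfin hh hn⟩

end Distortion

def WalkIn (P : Set G) (g : G) (l : List G) : Prop :=
  ∀ j, g * (l.take j).prod ∈ P

namespace WalkIn

variable {P Q : Set G} {g : G} {l l₁ l₂ : List G}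

theorem mono (hPQ : P ⊆ Q) (h : WalkIn P g l) : WalkIn Q g l :=
  fun j => hPQ (h j)

theorem append (h₁ : WalkIn P g l₁) (h₂ : WalkIn P (g * l₁.prod) l₂) :
    WalkIn P g (l₁ ++ l₂) := by
  intro j
  rw [List.take_append, List.prod_append]
  rcases le_or_gt j l₁.length with hj | hj
  · simpa [Nat.sub_eq_zero_of_le hj] using h₁ j
  · rw [List.take_of_length_le hj.le, ← mul_assoc]
    exact h₂ _

theorem wordInv (h : WalkIn P g l) : WalkIn P (g * l.prod) (wordInv l) := by
  intro j
  have hsplit : l.prod = (l.take (l.length - j)).prod * (l.drop (l.length - j)).prod := by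
    rw [← List.prod_append, List.take_append_drop]
  rw [take_wordInv, prod_wordInv, hsplit, ← mul_assoc, mul_inv_cancel_right]
  exact h _

end WalkIn

theorem walkIn_of_add_length_le {S : Set G} (hS : Subgroup.closure S = ⊤) {l : List G}
    (hl : IsWord S l) {g : G} {R : ℕ} (h : R + l.length ≤ wordLength S g) :
    WalkIn {x | R ≤ wordLength S x} g l := by
  intro j
  have := wordLength_le_mul_add hS g (l.take j).prod
  have := (wordLength_prod_le (hl.take j)).trans (List.length_take_le' j l)
  change R ≤ wordLength S _
  omega

theorem walkIn_of_isWord_ker {B : Type*} [Group B] (f : G →* B) {S T : Set G}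
    (hS : Subgroup.closure S = ⊤) (hTf : T ⊆ f.ker) {l : List G} (hl : IsWord T l) (g : G) :
    WalkIn {x | wordLength (f '' S) (f g) ≤ wordLength S x} g l := by
  intro j
  calc wordLength (f '' S) (f g)
      = wordLength (f '' S) (f (g * (l.take j).prod)) := by
        rw [map_mul, map_prod_eq_one_of_isWord f hTf (hl.take j), mul_one]
    _ ≤ _ := wordLength_map_le f (hS ▸ Subgroup.mem_top _)

theorem exists_path_of_walkIn {S P : Set G} {l : List G} (hl : IsWord S l) {x : G}
    (hP : WalkIn P x l) :
    ∃ g : Fin (l.length + 1) → G, g 0 = x ∧ g (Fin.last _) = x * l.prod ∧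
      (∀ j : Fin l.length, (g j.castSucc)⁻¹ * g j.succ ∈ S ∪ S⁻¹) ∧ ∀ j, g j ∈ P := by
  refine ⟨fun j => x * (l.take j).prod, by simp, by simp, fun j => ?_, fun j => hP j⟩
  simp only [Fin.val_castSucc, Fin.val_succ, List.take_succ_eq_append_getElem j.isLt,
    List.prod_append, List.prod_singleton, mul_inv_rev, ← mul_assoc, inv_mul_cancel_right,
    inv_mul_cancel, one_mul]
  exact hl _ (List.getElem_mem j.isLt)

section Divergence

variable {S T : Set G} {H : Subgroup G}

theorem exists_walkIn_le_wordLength_map {B : Type*} [Group B] [Infinite B] (f : G →* B)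
    (hS : Subgroup.closure S = ⊤) (hfS : Subgroup.closure (f '' S) = ⊤) (hSfin : S.Finite)
    (x : G) {R : ℕ} (hR : R + R ≤ wordLength S x + 1) :
    ∃ w, IsWord S w ∧ w.length ≤ R ∧ WalkIn {g | R ≤ wordLength S g} x w ∧
      R ≤ wordLength (f '' S) (f (x * w.prod)) := by
  obtain ⟨e, he, hfe⟩ := exists_wordLength_le_le_wordLength_mul hfS (hSfin.image f) (f x) R
  obtain ⟨w, hw, hwlen, hwe⟩ := exists_isWord_map_prod_eq f hfS e
  have hfar : R ≤ wordLength (f '' S) (f (x * w.prod)) := by rwa [map_mul, hwe]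
  refine ⟨w, hw, hwlen ▸ he, fun j => ?_, hfar⟩
  rcases lt_or_ge j w.length with hj | hj
  · have := wordLength_le_mul_add hS x (w.take j).prod
    have := (wordLength_prod_le (hw.take j)).trans (List.length_take_le j w)
    change R ≤ wordLength S _
    omega
  · rw [List.take_of_length_le hj]
    exact hfar.trans (wordLength_map_le f (hS ▸ Subgroup.mem_top _))

theorem exists_isWord_wordLength_mul_prod_eq (hS : Subgroup.closure S = ⊤) (hSfin : S.Finite)
    (hTS : T ⊆ S) (hT : Subgroup.closure T = H) (hHinf : (H : Set G).Infinite) (z : G)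
    {m n : ℕ} (hm : wordLength S z ≤ m) (hn : m + wordLength S z ≤ n) :
    ∃ w, IsWord T w ∧ wordLength S (z * w.prod) = m ∧ w.length ≤ distortion S T H n := by
  obtain ⟨k, hkH, hk⟩ : ∃ k ∈ H, m + wordLength S z ≤ wordLength S k := by
    by_contra! hsmall
    exact hHinf ((finite_setOf_wordLength_le hS hSfin _).subset fun k hk => (hsmall k hk).le)
  obtain ⟨l, hl, rfl⟩ := exists_isWord_prod_eq (hT ▸ hkH)
  obtain ⟨j, hj⟩ := exists_wordLength_mul_prod_take_eq hS (hl.mono hTS) hm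
    (by have := wordLength_le_add_mul hS z l.prod; omega)
  obtain ⟨w, hw, hwj, hwlen⟩ := exists_isWord_prod_eq_length_le_distortion hS hSfin hT
    (hT ▸ (hl.take j).prod_mem_closure) (n := n)
    (by have := wordLength_le_add_mul hS z (l.take j).prod; omega)
  exact ⟨w, hw, hwj ▸ hj, hwlen⟩

variable [H.Normal]

theorem subset_ker_mk' (hT : Subgroup.closure T = H) : T ⊆ (QuotientGroup.mk' H).ker := by
  rw [QuotientGroup.ker_mk']
  exact hT ▸ Subgroup.subset_closure

theorem exists_walkIn_to_coset (hS : Subgroup.closure S = ⊤) (hSfin : S.Finite) (hTS : T ⊆ S)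
    (hT : Subgroup.closure T = H) (hHinf : (H : Set G).Infinite) [Infinite (G ⧸ H)]
    {r R : ℕ} (hRr : 2 * R ≤ r + 1) {q : G ⧸ H}
    (hq : wordLength (QuotientGroup.mk' H '' S) q = R) {x : G} (hx : wordLength S x = r) :
    ∃ W, IsWord S W ∧ WalkIn {g | R ≤ wordLength S g} x W ∧
      QuotientGroup.mk' H (x * W.prod) = q ∧ wordLength S (x * W.prod) ≤ 12 * r + 1 ∧
      W.length ≤ distortion S T H (32 * r) + 3 * r + 2 := by
  set π := QuotientGroup.mk' H
  have hπS := closure_image_eq_top π (QuotientGroup.mk'_surjective H) hS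
  have hTπ : T ⊆ π.ker := subset_ker_mk' hT
  obtain ⟨w₁, hw₁, hw₁len, hwalk₁, hfar⟩ :=
    exists_walkIn_le_wordLength_map π hS hπS hSfin x (R := R) (by omega)
  set z := x * w₁.prod
  have hz : wordLength S z ≤ r + R :=
    (wordLength_mul_le hS x w₁.prod).trans (by have := wordLength_prod_le hw₁; omega)
  -- `10 r` is far enough that the last leg, of length at most `2 r + 1`, stays outside `R`.
  obtain ⟨w₂, hw₂, hw₂len, hw₂D⟩ := exists_isWord_wordLength_mul_prod_eq hS hSfin hTS hT hHinf z
    (m := 10 * r) (n := 32 * r) (by omega) (by omega)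
  have hcoset : π (z * w₂.prod) = π z := by rw [map_mul, map_prod_eq_one_of_isWord π hTπ hw₂, mul_one]
  obtain ⟨w₃, hw₃, hw₃len, hw₃q⟩ := exists_isWord_map_prod_eq π hπS ((π (z * w₂.prod))⁻¹ * q)
  have hw₃len' : w₃.length ≤ r + 2 * R := by
    have := wordLength_mul_le hπS (π (z * w₂.prod))⁻¹ q
    have := wordLength_map_le π (hS ▸ Subgroup.mem_top z)
    rw [wordLength_inv hπS, hcoset] at *
    omega
  have hend : x * (w₁ ++ (w₂ ++ w₃)).prod = z * w₂.prod * w₃.prod := by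
    simp only [List.prod_append, z, mul_assoc]
  refine ⟨w₁ ++ (w₂ ++ w₃), hw₁.append ((hw₂.mono hTS).append hw₃), ?_, ?_, ?_, ?_⟩
  · refine hwalk₁.append (((walkIn_of_isWord_ker π hS hTπ hw₂ z).mono ?_).append ?_)
    · exact fun g hg => hfar.trans hg
    · exact walkIn_of_add_length_le hS hw₃ (by omega)
  · rw [hend, map_mul, hw₃q, mul_inv_cancel_left]
  · have := wordLength_mul_le hS (z * w₂.prod) w₃.prod
    have := wordLength_prod_le hw₃
    rw [hend]
    omega
  · simp only [List.length_append]
    omega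

theorem exists_walkIn_connecting (hS : Subgroup.closure S = ⊤) (hSfin : S.Finite) (hTS : T ⊆ S)
    (hT : Subgroup.closure T = H) (hHinf : (H : Set G).Infinite) [Infinite (G ⧸ H)]
    {r : ℕ} (hr : 0 < r) {x y : G} (hx : wordLength S x = r) (hy : wordLength S y = r) :
    ∃ W, IsWord S W ∧ WalkIn {g | r ≤ 2 * wordLength S g} x W ∧ x * W.prod = y ∧
      W.length ≤ 4 * distortion S T H (32 * r) + 12 * r := by
  set R := (r + 1) / 2
  have hπS := closure_image_eq_top (QuotientGroup.mk' H) (QuotientGroup.mk'_surjective H) hS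
  obtain ⟨q, hq⟩ := exists_wordLength_eq hπS (hSfin.image _) R
  obtain ⟨Wx, hWx, hwalkx, hqx, hzx, hWxlen⟩ :=
    exists_walkIn_to_coset hS hSfin hTS hT hHinf (by omega) hq hx
  obtain ⟨Wy, hWy, hwalky, hqy, hzy, hWylen⟩ :=
    exists_walkIn_to_coset hS hSfin hTS hT hHinf (by omega) hq hy
  set zx := x * Wx.prod
  set zy := y * Wy.prod
  have hmem : zx⁻¹ * zy ∈ H := QuotientGroup.eq.mp (hqx.trans hqy.symm)
  obtain ⟨w, hw, hwp, hwlen⟩ := exists_isWord_prod_eq_length_le_distortion hS hSfin hT hmem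
    (n := 32 * r) (by have := wordLength_mul_le hS zx⁻¹ zy; rw [wordLength_inv hS] at this; omega)
  have hmid : zx * w.prod = zy := by rw [hwp, mul_inv_cancel_left]
  refine ⟨Wx ++ (w ++ wordInv Wy), hWx.append ((hw.mono hTS).append hWy.wordInv), ?_, ?_, ?_⟩
  · have hwalkw : WalkIn {g | R ≤ wordLength S g} zx w := by
      have := walkIn_of_isWord_ker _ hS (subset_ker_mk' hT) hw zx
      rwa [hqx, hq] at this
    have hwalky' : WalkIn {g | R ≤ wordLength S g} (zx * w.prod) (wordInv Wy) :=
      hmid ▸ hwalky.wordInv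
    exact (hwalkx.append (hwalkw.append hwalky')).mono fun g (hg : R ≤ _) => show r ≤ _ by omega
  · rw [List.prod_append, List.prod_append, prod_wordInv, ← mul_assoc, ← mul_assoc, hmid]
    exact mul_inv_cancel_right y Wy.prod
  · simp only [List.length_append, length_wordInv]
    omega

end Divergence

end WordMetric

open WordMetric in
theorem stmt0_general {G : Type*} [Group G] (S T : Set G) (H : Subgroup G)
    (hSfin : S.Finite) (hSgen : Subgroup.closure S = ⊤)
    (hTS : T ⊆ S)
    (hTgen : Subgroup.closure T = H)
    (hnormal : H.Normal) (hHinf : (H : Set G).Infinite) (hHindex : H.index = 0) :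
    ∀ r : ℕ, 0 < r → ∀ x y : G, wordLength S x = r → wordLength S y = r →
      ∃ (n : ℕ) (g : Fin (n + 1) → G),
        g 0 = x ∧ g (Fin.last n) = y ∧
        (∀ j : Fin n, (g j.castSucc)⁻¹ * g j.succ ∈ S ∪ S⁻¹) ∧
        (∀ j : Fin (n + 1), r ≤ 2 * wordLength S (g j)) ∧
        n ≤ 4 * distortion S T H (32 * r) + 12 * r := by
  intro r hr x y hx hy
  have : Infinite (G ⧸ H) := Subgroup.index_eq_zero_iff_infinite.mp hHindex
  obtain ⟨W, hW, hwalk, hxy, hlen⟩ :=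
    exists_walkIn_connecting hSgen hSfin hTS hTgen hHinf hr hx hy
  obtain ⟨g, hg0, hglast, hgstep, hg⟩ := exists_path_of_walkIn hW hwalk
  exact ⟨W.length, g, hg0, hglast.trans hxy, hgstep, hg, hlen⟩

theorem stmt0 {G : Type*} [Group G] (S T : Set G) (H : Subgroup G)
    (hSfin : S.Finite) (hSgen : Subgroup.closure S = ⊤)
    (hTfin : T.Finite) (hTS : T ⊆ S) (hTH : T ⊆ (H : Set G))
    (hTgen : Subgroup.closure T = H)
    (hnormal : H.Normal) (hHinf : (H : Set G).Infinite) (hHindex : H.index = 0) :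
    ∀ r : ℕ, 0 < r → ∀ x y : G, wordLength S x = r → wordLength S y = r →
      ∃ (n : ℕ) (g : Fin (n + 1) → G),
        g 0 = x ∧ g (Fin.last n) = y ∧
        (∀ j : Fin n, (g j.castSucc)⁻¹ * g j.succ ∈ S ∪ S⁻¹) ∧
        (∀ j : Fin (n + 1), r ≤ 2 * wordLength S (g j)) ∧
        n ≤ 4 * distortion S T H (32 * r) + 12 * r :=
  stmt0_general S T H hSfin hSgen hTS hTgen hnormal hHinf hHindex
end

section
/- Let Γ be a connected finite simplicial graph with at least two vertices, let p : A_Γ → ℤ be a group homomorphism, and let N = ker p. Let Γ' be the induced subgraph of Γ on the vertices that p maps to nonzero integers. If Γ' is connected and every vertex of Γ either lies in Γ' or is adjacent to a vertex of Γ', then N is finitely generated and the distortion of N in A_Γ is at most quadratic, i.e. Dist_{A_Γ}^N ⪯ n². -/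
/-- `f ⪯ g`. -/
def Dominated (f g : ℕ → ℕ) : Prop :=
  ∃ A B C D : ℕ, 0 < A ∧ 0 < B ∧ 0 < C ∧ ∀ x : ℕ, D < x → f x ≤ A * g (B * x) + C * x

/-- The defining relators of the right-angled Artin group of a graph `Γ`. -/
def raagRels {V : Type*} (Γ : SimpleGraph V) : Set (FreeGroup V) :=
  {r | ∃ u v : V, Γ.Adj u v ∧
    r = FreeGroup.of u * FreeGroup.of v * (FreeGroup.of u)⁻¹ * (FreeGroup.of v)⁻¹}

/-- The right-angled Artin group of a graph `Γ`. -/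
abbrev RAAG {V : Type*} (Γ : SimpleGraph V) : Type _ := PresentedGroup (raagRels Γ)

/-- The standard generator of `RAAG Γ` associated to a vertex. -/
def raagGen {V : Type*} (Γ : SimpleGraph V) (v : V) : RAAG Γ := PresentedGroup.of v

/-!
Let `L` be the set of vertices `v` with `p(x_v) ≠ 0`, and choose powers `y_a = x_a ^ Q_a`
(`a ∈ L`) all of the same height `P ≠ 0`. Along an edge of `L` the elements `y_a`, `y_b` commute,
so `y_a^q y_b^{-q} = (y_a y_b⁻¹)^q`; as `L` is connected, `y_a^q y_b^{-q}` is a product of `O(|q|)`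
kernel elements `y_c y_d⁻¹`. Every generator commutes with some `y_a` (it lies in `L` or is
adjacent to it), so `y_a^q` can be pushed across a word `w` of bounded length at the price of
`O(|q|)` conjugates of these kernel elements by prefixes of `w`.

A kernel element of length `n` telescopes along the staircase
`τ c = y_{a₀}^(c / P) * (a bounded element of height c % P)` over the heights `c = O(n)` of its
prefixes. Each of the `n` factors is the conjugate of a short kernel element by `y_{a₀}^q` with
`|q| = O(n)`, hence a product of `O(n)` short kernel elements: `O(n²)` in total.
-/

open scoped Pointwise

section WordBall

variable {G H : Type*} [Group G] [Group H] {S T : Set G} {g h : G} {m n : ℕ}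

def wordBall (S : Set G) (n : ℕ) : Set G := insert 1 (S ∪ S⁻¹) ^ n

theorem wordBall_zero : wordBall S 0 = {1} := pow_zero _

theorem mem_wordBall_one_iff : g ∈ wordBall S 1 ↔ g = 1 ∨ g ∈ S ∨ g⁻¹ ∈ S := by
  simp [wordBall]

theorem mem_wordBall_succ :
    g ∈ wordBall S (n + 1) ↔ ∃ h ∈ wordBall S n, ∃ s ∈ wordBall S 1, h * s = g := by
  rw [wordBall, wordBall, wordBall, pow_succ, pow_one, Set.mem_mul]

theorem one_mem_wordBall : (1 : G) ∈ wordBall S n := Set.one_mem_pow (Set.mem_insert 1 _)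

theorem mem_wordBall_one (hg : g ∈ S) : g ∈ wordBall S 1 :=
  mem_wordBall_one_iff.2 (Or.inr (Or.inl hg))

theorem wordBall_mono (hmn : m ≤ n) : wordBall S m ⊆ wordBall S n :=
  Set.pow_subset_pow_right (Set.mem_insert 1 _) hmn

theorem mul_mem_wordBall (hg : g ∈ wordBall S m) (hh : h ∈ wordBall S n) :
    g * h ∈ wordBall S (m + n) := by
  rw [wordBall, pow_add]
  exact Set.mul_mem_mul hg hh

theorem inv_mem_wordBall (hg : g ∈ wordBall S n) : g⁻¹ ∈ wordBall S n := by
  have hinv : (insert (1 : G) (S ∪ S⁻¹))⁻¹ = insert 1 (S ∪ S⁻¹) := by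
    rw [Set.inv_insert, Set.union_inv, inv_inv, inv_one, Set.union_comm]
  rw [wordBall, ← hinv, inv_pow, Set.mem_inv, inv_inv]
  exact hg

theorem pow_mem_wordBall (hg : g ∈ wordBall S m) (k : ℕ) : g ^ k ∈ wordBall S (m * k) := by
  rw [wordBall, pow_mul]
  exact Set.pow_mem_pow hg

theorem zpow_mem_wordBall (hg : g ∈ wordBall S m) (k : ℤ) :
    g ^ k ∈ wordBall S (m * k.natAbs) := by
  obtain ⟨k, rfl | rfl⟩ := Int.eq_nat_or_neg k
  · simpa using pow_mem_wordBall hg k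
  · simpa using inv_mem_wordBall (pow_mem_wordBall hg k)

theorem wordBall_finite (hS : S.Finite) (n : ℕ) : (wordBall S n).Finite := by
  induction n with
  | zero => simp [wordBall_zero]
  | succ n ih =>
    rw [wordBall, pow_succ]
    exact ih.mul ((hS.union hS.inv).insert 1)

theorem map_mem_wordBall {F : Type*} [FunLike F G H] [MonoidHomClass F G H] (f : F)
    {T : Set H} {M : ℕ} (hf : ∀ s ∈ S, f s ∈ wordBall T M) (hg : g ∈ wordBall S n) :
    f g ∈ wordBall T (M * n) := by
  induction n generalizing g with
  | zero => simp_all [wordBall_zero]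
  | succ n ih =>
    obtain ⟨h, hh, s, hs, rfl⟩ := mem_wordBall_succ.1 hg
    rw [map_mul, Nat.mul_succ]
    refine mul_mem_wordBall (ih hh) ?_
    rcases mem_wordBall_one_iff.1 hs with rfl | hs | hs
    · simpa using one_mem_wordBall
    · exact hf s hs
    · simpa using inv_mem_wordBall (hf _ hs)

theorem conj_mem_wordBall {Z : Set G} {c : G} (hc : ∀ z ∈ Z, c * z * c⁻¹ ∈ T)
    (hg : g ∈ wordBall Z n) : c * g * c⁻¹ ∈ wordBall T n := by
  simpa using map_mem_wordBall (MulAut.conj c) (M := 1) (fun z hz => mem_wordBall_one (hc z hz)) hg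

theorem wordBall_subset_closure : wordBall S n ⊆ Subgroup.closure S := by
  intro g hg
  induction n generalizing g with
  | zero => simp_all [wordBall_zero]
  | succ n ih =>
    obtain ⟨h, hh, s, hs, rfl⟩ := mem_wordBall_succ.1 hg
    refine mul_mem (ih hh) ?_
    rcases mem_wordBall_one_iff.1 hs with rfl | hs | hs
    · exact one_mem _
    · exact Subgroup.subset_closure hs
    · simpa using inv_mem (Subgroup.subset_closure hs)

theorem exists_mem_wordBall_of_mem_closure (hg : g ∈ Subgroup.closure S) :
    ∃ n, g ∈ wordBall S n := by
  induction hg using Subgroup.closure_induction with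
  | mem s hs => exact ⟨1, mem_wordBall_one hs⟩
  | one => exact ⟨0, one_mem_wordBall⟩
  | mul g h _ _ hg hh =>
    obtain ⟨m, hg⟩ := hg
    obtain ⟨n, hh⟩ := hh
    exact ⟨m + n, mul_mem_wordBall hg hh⟩
  | inv g _ hg =>
    obtain ⟨n, hg⟩ := hg
    exact ⟨n, inv_mem_wordBall hg⟩

theorem exists_subset_wordBall {s : Set G} (hs : s.Finite) (hsS : s ⊆ Subgroup.closure S) :
    ∃ M, s ⊆ wordBall S M := by
  induction s, hs using Set.Finite.induction_on with
  | empty => exact ⟨0, Set.empty_subset _⟩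
  | @insert a s _ _ ih =>
    obtain ⟨M, hM⟩ := ih ((Set.subset_insert a s).trans hsS)
    obtain ⟨m, hm⟩ := exists_mem_wordBall_of_mem_closure (hsS (Set.mem_insert a s))
    exact ⟨max m M, Set.insert_subset (wordBall_mono (le_max_left _ _) hm)
      (hM.trans (wordBall_mono (le_max_right _ _)))⟩

theorem mem_wordBall_iff : g ∈ wordBall S n ↔
    ∃ l : List G, l.length ≤ n ∧ (∀ x ∈ l, x ∈ S ∨ x⁻¹ ∈ S) ∧ l.prod = g := by
  constructor
  · intro hg
    induction n generalizing g with
    | zero => exact ⟨[], le_rfl, by simp, by simp_all [wordBall_zero]⟩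
    | succ n ih =>
      obtain ⟨h, hh, s, hs, rfl⟩ := mem_wordBall_succ.1 hg
      obtain ⟨l, hl, hlS, rfl⟩ := ih hh
      rcases mem_wordBall_one_iff.1 hs with rfl | hs
      · exact ⟨l, hl.trans n.le_succ, hlS, by simp⟩
      · refine ⟨l ++ [s], by simpa using hl, ?_, by simp⟩
        simpa [or_imp, forall_and] using ⟨hlS, hs⟩
  · rintro ⟨l, hl, hlS, rfl⟩
    refine wordBall_mono hl ?_
    clear hl
    induction l with
    | nil => exact one_mem_wordBall
    | cons x l ih =>
      rw [List.prod_cons, List.length_cons, add_comm]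
      refine mul_mem_wordBall ?_ (ih fun y hy => hlS y (by simp [hy]))
      exact mem_wordBall_one_iff.2 (Or.inr (hlS x (by simp)))

theorem wordLength_le_of_mem_wordBall (hg : g ∈ wordBall S n) : wordLength S g ≤ n := by
  obtain ⟨l, hl, hS, rfl⟩ := mem_wordBall_iff.1 hg
  refine le_trans (Nat.sInf_le ?_) hl
  exact ⟨l, rfl, hS, rfl⟩

theorem mem_wordBall_wordLength (hg : g ∈ Subgroup.closure S) :
    g ∈ wordBall S (wordLength S g) := by
  obtain ⟨n, hn⟩ := exists_mem_wordBall_of_mem_closure hg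
  obtain ⟨l, -, hS, hl⟩ := mem_wordBall_iff.1 hn
  obtain ⟨l', hl', hS', hl''⟩ := Nat.sInf_mem (⟨_, l, rfl, hS, hl⟩ : ∃ n, ∃ l : List G,
    l.length = n ∧ (∀ x ∈ l, x ∈ S ∨ x⁻¹ ∈ S) ∧ l.prod = g)
  exact mem_wordBall_iff.2 ⟨l', hl'.le, hS', hl''⟩

theorem mul_mul_inv_mem_wordBall_of_step (τ : G → G) {B : ℕ}
    (hstep : ∀ g ∈ wordBall S n, ∀ s ∈ wordBall S 1,
      τ g * s * (τ (g * s))⁻¹ ∈ wordBall T B)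
    (hg : g ∈ wordBall S n) : τ 1 * g * (τ g)⁻¹ ∈ wordBall T (n * B) := by
  suffices ∀ k ≤ n, ∀ g ∈ wordBall S k, τ 1 * g * (τ g)⁻¹ ∈ wordBall T (k * B) from
    this n le_rfl g hg
  intro k hk
  induction k with
  | zero => simp [wordBall_zero]
  | succ k ih =>
    rintro _ hgs
    obtain ⟨g, hg, s, hs, rfl⟩ := mem_wordBall_succ.1 hgs
    have hsplit : τ 1 * (g * s) * (τ (g * s))⁻¹ =
        (τ 1 * g * (τ g)⁻¹) * (τ g * s * (τ (g * s))⁻¹) := by group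
    rw [hsplit, Nat.succ_mul]
    exact mul_mem_wordBall (ih (by omega) g hg)
      (hstep g (wordBall_mono (by omega) hg) s hs)

end WordBall

section CommutingFamily

variable {G ι : Type*} [Group G] {S Z T : Set G} {y : ι → G}

theorem zpow_mul_inv_zpow_mem_wordBall_of_walk {Λ : SimpleGraph ι}
    (hy : ∀ a b, Λ.Adj a b → Commute (y a) (y b)) (hZ : ∀ a b, Λ.Adj a b → y a * (y b)⁻¹ ∈ Z)
    {a b : ι} (w : Λ.Walk a b) (q : ℤ) :
    y a ^ q * (y b ^ q)⁻¹ ∈ wordBall Z (w.length * q.natAbs) := by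
  induction w with
  | nil => simpa using one_mem_wordBall
  | @cons a c b hac w ih =>
    have hsplit : y a ^ q * (y b ^ q)⁻¹ = (y a * (y c)⁻¹) ^ q * (y c ^ q * (y b ^ q)⁻¹) := by
      rw [(hy a c hac).inv_right.mul_zpow, inv_zpow']
      group
    rw [hsplit, SimpleGraph.Walk.length_cons, add_mul, add_comm]
    exact mul_mem_wordBall (by simpa using zpow_mem_wordBall (mem_wordBall_one (hZ a c hac)) q) ih

/-- Each letter `s` of `w` commutes with some `y u ^ q`, so in front of `s` one may trade `y a ^ q`
for `y u ^ q` at the price of `y a ^ q * (y u ^ q)⁻¹`, conjugated into `T` by a prefix of `w`. -/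
theorem zpow_mul_mul_inv_zpow_mul_inv_mem_wordBall {q : ℤ} {K k : ℕ}
    (hZ : ∀ a b, y a ^ q * (y b ^ q)⁻¹ ∈ wordBall Z K) (hS : ∀ s ∈ S, ∃ a, Commute (y a) s)
    (hT : ∀ c ∈ wordBall S k, ∀ z ∈ Z, c * z * c⁻¹ ∈ T) (a : ι) {w : G}
    (hw : w ∈ wordBall S k) (b : ι) :
    y a ^ q * w * (y b ^ q)⁻¹ * w⁻¹ ∈ wordBall T ((k + 1) * K) := by
  suffices ∀ m ≤ k, ∀ w ∈ wordBall S m, ∀ b,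
      y a ^ q * w * (y b ^ q)⁻¹ * w⁻¹ ∈ wordBall T ((m + 1) * K) from this k le_rfl w hw b
  intro m hm
  induction m with
  | zero =>
    intro w hw b
    rw [wordBall_zero, Set.mem_singleton_iff] at hw
    subst hw
    simpa using conj_mem_wordBall (c := 1)
      (fun z hz => by simpa using hT 1 one_mem_wordBall z hz) (hZ a b)
  | succ m ih =>
    rintro _ hws b
    obtain ⟨w, hw, s, hs, rfl⟩ := mem_wordBall_succ.1 hws
    obtain ⟨u, hu⟩ : ∃ u, Commute (y u) s := by
      rcases mem_wordBall_one_iff.1 hs with rfl | hs | hs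
      · exact ⟨a, Commute.one_right _⟩
      · exact hS s hs
      · obtain ⟨u, hu⟩ := hS _ hs
        exact ⟨u, by simpa using hu.inv_right⟩
    have hconj : (y u ^ q)⁻¹ * s * y u ^ q = s := by
      rw [mul_assoc, ← (hu.zpow_left q).eq, inv_mul_cancel_left]
    have hsplit : y a ^ q * (w * s) * (y b ^ q)⁻¹ * (w * s)⁻¹ =
        (y a ^ q * w * (y u ^ q)⁻¹ * w⁻¹) *
          ((w * s) * (y u ^ q * (y b ^ q)⁻¹) * (w * s)⁻¹) := by
      calc _ = y a ^ q * w * ((y u ^ q)⁻¹ * s * y u ^ q) * (y b ^ q)⁻¹ * (w * s)⁻¹ := by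
            rw [hconj, mul_assoc (y a ^ q) w s]
        _ = _ := by group
    rw [hsplit, add_mul _ 1 K, one_mul]
    exact mul_mem_wordBall (ih (by omega) w hw u)
      (conj_mem_wordBall (hT _ (wordBall_mono hm hws)) (hZ u b))

end CommutingFamily

section QuadraticDistortion

variable {G : Type*} [Group G] {S : Set G} {H : Subgroup G}

def QuadraticallyDistorted (S : Set G) (H : Subgroup G) : Prop :=
  ∃ β C : ℕ, ∀ n, ∀ g ∈ H, g ∈ wordBall S n →
    g ∈ wordBall ((H : Set G) ∩ wordBall S β) (n * (C * n + 1))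

theorem QuadraticallyDistorted.fg (hS : Subgroup.closure S = ⊤) (hSfin : S.Finite)
    (hH : QuadraticallyDistorted S H) : H.FG := by
  obtain ⟨β, C, hβC⟩ := hH
  refine (Subgroup.fg_iff H).2 ⟨_, le_antisymm
    ((Subgroup.closure_le H).2 Set.inter_subset_left) fun g hg => ?_,
    (wordBall_finite hSfin β).subset Set.inter_subset_right⟩
  obtain ⟨n, hn⟩ := exists_mem_wordBall_of_mem_closure (hS ▸ Subgroup.mem_top g)
  exact wordBall_subset_closure (hβC n g hg hn)

theorem QuadraticallyDistorted.dominated_distortion (hS : Subgroup.closure S = ⊤)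
    (hSfin : S.Finite) (hH : QuadraticallyDistorted S H) {T : Set G}
    (hT : Subgroup.closure T = H) : Dominated (distortion S T H) (fun n => n ^ 2) := by
  obtain ⟨β, C, hβC⟩ := hH
  obtain ⟨M, hM⟩ := exists_subset_wordBall ((wordBall_finite hSfin β).subset
    Set.inter_subset_right) (by rw [hT]; exact Set.inter_subset_left)
  refine ⟨M * C + 1, 1, M + 1, 0, by omega, Nat.one_pos, by omega, fun r _ => csSup_le' ?_⟩
  rintro _ ⟨g, hg, hgr, rfl⟩
  have hgS := wordBall_mono hgr (mem_wordBall_wordLength (hS ▸ Subgroup.mem_top g))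
  refine (wordLength_le_of_mem_wordBall
    (map_mem_wordBall (MonoidHom.id G) (fun t ht => hM ht) (hβC r g hg hgS))).trans ?_
  nlinarith

end QuadraticDistortion

theorem natAbs_ediv_sub_ediv_le (a b : ℤ) {P : ℤ} (hP : P ≠ 0) :
    (a / P - b / P).natAbs ≤ (a - b).natAbs + 2 * P.natAbs := by
  have hkey : P * (a / P - b / P) = (a - b) - a % P + b % P := by
    linarith [Int.mul_ediv_add_emod a P, Int.mul_ediv_add_emod b P]
  have hmul := congrArg Int.natAbs hkey
  rw [Int.natAbs_mul] at hmul
  have hle : (a / P - b / P).natAbs ≤ P.natAbs * (a / P - b / P).natAbs :=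
    Nat.le_mul_of_pos_left _ (Int.natAbs_pos.2 hP)
  have := Int.emod_nonneg a hP
  have := Int.emod_nonneg b hP
  have := Int.emod_lt a hP
  have := Int.emod_lt b hP
  omega

section KernelOfCharacter

variable {G : Type*} [Group G] (p : G →* Multiplicative ℤ) {S : Set G}

theorem natAbs_toAdd_le_of_mem_wordBall {m n : ℕ} (hS : ∀ s ∈ S, (p s).toAdd.natAbs ≤ m)
    {g : G} (hg : g ∈ wordBall S n) : (p g).toAdd.natAbs ≤ m * n := by
  induction n generalizing g with
  | zero => simp_all [wordBall_zero]
  | succ n ih =>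
    obtain ⟨h, hh, s, hs, rfl⟩ := mem_wordBall_succ.1 hg
    have hsm : (p s).toAdd.natAbs ≤ m := by
      rcases mem_wordBall_one_iff.1 hs with rfl | hs | hs
      · simp
      · exact hS s hs
      · simpa using hS _ hs
    rw [map_mul, toAdd_mul, Nat.mul_succ]
    exact (Int.natAbs_add_le _ _).trans (Nat.add_le_add (ih hh) hsm)

theorem exists_section_toAdd : ∃ σ : ℤ → G, σ 0 = 1 ∧ ∀ g, p (σ (p g).toAdd) = p g := by
  classical
  refine ⟨fun c => if h : c ≠ 0 ∧ ∃ g, (p g).toAdd = c then h.2.choose else 1, by simp,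
    fun g => ?_⟩
  dsimp only
  split_ifs with h
  · exact Multiplicative.toAdd.injective h.2.choose_spec
  · have : (p g).toAdd = 0 := by
      by_contra hg
      exact h ⟨hg, g, rfl⟩
    rw [map_one]
    exact (toAdd_eq_zero.1 this).symm

/-- The staircase is `τ c = y₀ ^ (c / P) * σ (c % P)`, where `σ r` is a fixed element of height
`r`; it has bounded length because `0 ≤ c % P < |P|`. -/
theorem exists_stair (hS : Subgroup.closure S = ⊤) (hSfin : S.Finite) {y₀ : G} {P : ℤ}
    (hP : P ≠ 0) (hy₀ : (p y₀).toAdd = P) :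
    ∃ (τ : ℤ → G) (k : ℕ), τ 0 = 1 ∧ ∀ g, ∀ s ∈ wordBall S 1, ∃ t ∈ p.ker, t ∈ wordBall S k ∧
      τ (p g).toAdd * s * (τ (p (g * s)).toAdd)⁻¹ =
        y₀ ^ ((p g).toAdd / P) * t * (y₀ ^ ((p g).toAdd / P))⁻¹ := by
  have hcl : ∀ g, g ∈ Subgroup.closure S := fun g => hS ▸ Subgroup.mem_top g
  obtain ⟨σ, hσ0, hσ⟩ := exists_section_toAdd p
  obtain ⟨M, hM⟩ := exists_subset_wordBall ((Set.finite_Ico 0 (P.natAbs : ℤ)).image σ)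
    fun g _ => hcl g
  obtain ⟨ℓ, hℓ⟩ := exists_mem_wordBall_of_mem_closure (hcl y₀)
  obtain ⟨m, hm⟩ := (hSfin.image fun s => (p s).toAdd.natAbs).bddAbove
  set τ : ℤ → G := fun c => y₀ ^ (c / P) * σ (c % P)
  have hστ : ∀ g, σ ((p g).toAdd % P) ∈ wordBall S M := fun g =>
    hM ⟨_, ⟨Int.emod_nonneg _ hP, Int.emod_lt _ hP⟩, rfl⟩
  have hpτ : ∀ g, p (τ (p g).toAdd) = p g := fun g => by
    have hres : (p (g * y₀ ^ (-((p g).toAdd / P)))).toAdd = (p g).toAdd % P := by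
      simp only [map_mul, map_zpow, toAdd_mul, toAdd_zpow, hy₀, smul_eq_mul, Int.emod_def]
      ring
    have hσres := hσ (g * y₀ ^ (-((p g).toAdd / P)))
    rw [hres] at hσres
    simp only [τ, map_mul, map_zpow, hσres]
    rw [mul_left_comm, ← zpow_add, add_neg_cancel, zpow_zero, mul_one]
  refine ⟨τ, 2 * M + 1 + ℓ * (m + 2 * P.natAbs), by simp [τ, hσ0], fun g s hs => ?_⟩
  have hsm : ((p g).toAdd - (p (g * s)).toAdd).natAbs ≤ m := by
    rw [map_mul, toAdd_mul, sub_add_cancel_left, Int.natAbs_neg]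
    simpa using natAbs_toAdd_le_of_mem_wordBall p (fun s hs => hm ⟨s, hs, rfl⟩) hs
  set t := σ ((p g).toAdd % P) * s * (σ ((p (g * s)).toAdd % P))⁻¹ *
    y₀ ^ ((p g).toAdd / P - (p (g * s)).toAdd / P)
  have heq : τ (p g).toAdd * s * (τ (p (g * s)).toAdd)⁻¹ =
      y₀ ^ ((p g).toAdd / P) * t * (y₀ ^ ((p g).toAdd / P))⁻¹ := by
    simp only [τ, t]
    group
  have hker : τ (p g).toAdd * s * (τ (p (g * s)).toAdd)⁻¹ ∈ p.ker := by
    rw [MonoidHom.mem_ker, map_mul, map_mul, map_inv, hpτ, hpτ, map_mul, mul_inv_cancel]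
  refine ⟨t, ?_, ?_, heq⟩
  · convert p.normal_ker.conj_mem _ hker (y₀ ^ ((p g).toAdd / P))⁻¹ using 1
    rw [heq]
    group
  · have hqq' : ((p g).toAdd / P - (p (g * s)).toAdd / P).natAbs ≤ m + 2 * P.natAbs :=
      (natAbs_ediv_sub_ediv_le _ _ hP).trans (Nat.add_le_add_right hsm _)
    refine wordBall_mono ?_ (mul_mem_wordBall (mul_mem_wordBall (mul_mem_wordBall (hστ g) hs)
      (inv_mem_wordBall (hστ (g * s)))) (zpow_mem_wordBall hℓ _))
    have := Nat.mul_le_mul_left ℓ hqq'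
    omega

theorem quadraticallyDistorted_ker {ι : Type*} {Z : Set G} {y : ι → G} {K : ℕ}
    (hS : Subgroup.closure S = ⊤) (hSfin : S.Finite) (hZfin : Z.Finite)
    (hZ : Z ⊆ p.ker) (hZy : ∀ (q : ℤ) a b, y a ^ q * (y b ^ q)⁻¹ ∈ wordBall Z (K * q.natAbs))
    (hSy : ∀ s ∈ S, ∃ a, Commute (y a) s) {a₀ : ι} (ha₀ : p (y a₀) ≠ 1) :
    QuadraticallyDistorted S p.ker := by
  obtain ⟨τ, k, hτ0, hτ⟩ := exists_stair p hS hSfin (toAdd_eq_zero.not.2 ha₀) rfl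
  obtain ⟨r, hr⟩ := exists_subset_wordBall hZfin fun z _ => hS ▸ Subgroup.mem_top z
  obtain ⟨m, hm⟩ := (hSfin.image fun s => (p s).toAdd.natAbs).bddAbove
  refine ⟨2 * k + r, (k + 1) * K * m, fun n g hg hgn => ?_⟩
  set T := (p.ker : Set G) ∩ wordBall S (2 * k + r)
  have hT : ∀ c ∈ wordBall S k, ∀ z ∈ Z, c * z * c⁻¹ ∈ T := fun c hc z hz =>
    ⟨p.normal_ker.conj_mem z (hZ hz) c, wordBall_mono (by omega)
      (mul_mem_wordBall (mul_mem_wordBall hc (hr hz)) (inv_mem_wordBall hc))⟩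
  have hstep : ∀ h ∈ wordBall S n, ∀ s ∈ wordBall S 1,
      τ (p h).toAdd * s * (τ (p (h * s)).toAdd)⁻¹ ∈ wordBall T ((k + 1) * K * m * n + 1) := by
    intro h hh s hs
    obtain ⟨t, htker, htk, heq⟩ := hτ h s hs
    set q := (p h).toAdd / (p (y a₀)).toAdd
    have hq : q.natAbs ≤ m * n := (Int.natAbs_ediv_le_natAbs _ _).trans
      (natAbs_toAdd_le_of_mem_wordBall p (fun s hs => hm ⟨s, hs, rfl⟩) hh)
    have hsplit : y a₀ ^ q * t * (y a₀ ^ q)⁻¹ = (y a₀ ^ q * t * (y a₀ ^ q)⁻¹ * t⁻¹) * t := by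
      group
    rw [heq, hsplit]
    refine wordBall_mono ?_ (mul_mem_wordBall
      (zpow_mul_mul_inv_zpow_mul_inv_mem_wordBall (hZy q) hSy hT a₀ htk a₀)
      (mem_wordBall_one ⟨htker, wordBall_mono (by omega) htk⟩))
    have := Nat.mul_le_mul_left ((k + 1) * K) hq
    nlinarith
  simpa [hτ0, MonoidHom.mem_ker.1 hg] using
    mul_mul_inv_mem_wordBall_of_step (fun h => τ (p h).toAdd) hstep hgn

end KernelOfCharacter

theorem exists_mul_eq_of_ne_zero {ι : Type*} [Fintype ι] (f : ι → ℤ) (hf : ∀ i, f i ≠ 0) :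
    ∃ P ≠ 0, ∃ Q : ι → ℤ, ∀ i, f i * Q i = P := by
  classical
  exact ⟨∏ i, f i, Finset.prod_ne_zero_iff.2 fun i _ => hf i,
    fun i => ∏ j ∈ Finset.univ.erase i, f j, fun i => Finset.mul_prod_erase _ f (Finset.mem_univ i)⟩

section RAAG

variable {V : Type*} (Γ : SimpleGraph V)

theorem raagGen_commute {u v : V} (h : Γ.Adj u v) : Commute (raagGen Γ u) (raagGen Γ v) := by
  rw [← commutatorElement_eq_one_iff_commute]
  have hrel : PresentedGroup.mk (raagRels Γ)
      (FreeGroup.of u * FreeGroup.of v * (FreeGroup.of u)⁻¹ * (FreeGroup.of v)⁻¹) = 1 :=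
    (QuotientGroup.eq_one_iff _).2 (Subgroup.subset_normalClosure ⟨u, v, h, rfl⟩)
  simpa [commutatorElement_def, raagGen, PresentedGroup.of] using hrel

theorem closure_range_raagGen : Subgroup.closure (Set.range (raagGen Γ)) = ⊤ :=
  PresentedGroup.closure_range_of _

/-- Take `y a = x_a ^ (P / p(x_a))` on the vertices where `p` is nonzero, for a common multiple
`P` of these heights; then `Z` consists of the kernel elements `y a * (y b)⁻¹` along edges. -/
theorem quadraticallyDistorted_ker_raag [Fintype V] (p : RAAG Γ →* Multiplicative ℤ)
    (hconn' : (Γ.induce {v : V | p (raagGen Γ v) ≠ 1}).Connected)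
    (hstar : ∀ v : V, p (raagGen Γ v) ≠ 1 ∨ ∃ u : V, p (raagGen Γ u) ≠ 1 ∧ Γ.Adj v u) :
    QuadraticallyDistorted (Set.range (raagGen Γ)) p.ker := by
  classical
  set L := {v : V | p (raagGen Γ v) ≠ 1}
  obtain ⟨P, hP, Q, hQ⟩ := exists_mul_eq_of_ne_zero (fun a : L => (p (raagGen Γ a)).toAdd)
    fun a => toAdd_eq_zero.not.2 a.2
  set y : L → RAAG Γ := fun a => raagGen Γ a ^ Q a
  have hy : ∀ a, p (y a) = Multiplicative.ofAdd P := fun a => by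
    apply Multiplicative.toAdd.injective
    rw [map_zpow, toAdd_zpow, toAdd_ofAdd, smul_eq_mul, mul_comm, hQ]
  have hadj : ∀ a b, (Γ.induce L).Adj a b → Commute (y a) (y b) := fun a b h =>
    (raagGen_commute Γ (by simpa using h)).zpow_zpow _ _
  obtain ⟨a₀⟩ := hconn'.nonempty
  refine quadraticallyDistorted_ker p (closure_range_raagGen Γ) (Set.finite_range _)
    (Z := {z | ∃ c d, (Γ.induce L).Adj c d ∧ y c * (y d)⁻¹ = z}) (y := y) (K := Fintype.card L)
    ((Set.finite_range fun cd : L × L => y cd.1 * (y cd.2)⁻¹).subset ?_) ?_ (fun q a b => ?_) ?_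
    (a₀ := a₀) (by simpa [hy] using hP)
  · rintro _ ⟨c, d, -, rfl⟩
    exact ⟨(c, d), rfl⟩
  · rintro _ ⟨c, d, -, rfl⟩
    simp [hy]
  · obtain ⟨w⟩ := hconn'.preconnected a b
    refine wordBall_mono (Nat.mul_le_mul_right _ w.bypass_isPath.length_lt.le)
      (zpow_mul_inv_zpow_mem_wordBall_of_walk hadj ?_ w.bypass q)
    exact fun c d h => ⟨c, d, h, rfl⟩
  · rintro _ ⟨v, rfl⟩
    rcases hstar v with hv | ⟨u, hu, hvu⟩
    · exact ⟨⟨v, hv⟩, (Commute.refl _).zpow_left _⟩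
    · exact ⟨⟨u, hu⟩, (raagGen_commute Γ hvu.symm).zpow_left _⟩

end RAAG

theorem stmt3_general {V : Type*} [Fintype V] (Γ : SimpleGraph V)
    (p : RAAG Γ →* Multiplicative ℤ)
    (hconn' : (Γ.induce {v : V | p (raagGen Γ v) ≠ 1}).Connected)
    (hstar : ∀ v : V, p (raagGen Γ v) ≠ 1 ∨
      ∃ u : V, p (raagGen Γ u) ≠ 1 ∧ Γ.Adj v u) :
    Subgroup.FG p.ker ∧
    ∀ T : Set (RAAG Γ), T.Finite → T ⊆ (p.ker : Set (RAAG Γ)) →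
      Subgroup.closure T = p.ker →
      Dominated (distortion (Set.range (raagGen Γ)) T p.ker) (fun n => n ^ 2) := by
  have hker := quadraticallyDistorted_ker_raag Γ p hconn' hstar
  exact ⟨hker.fg (closure_range_raagGen Γ) (Set.finite_range _), fun T _ _ hT =>
    hker.dominated_distortion (closure_range_raagGen Γ) (Set.finite_range _) hT⟩

theorem stmt3 {V : Type*} [Fintype V] (Γ : SimpleGraph V)
    (hconn : Γ.Connected) (hcard : 2 ≤ Fintype.card V)
    (p : RAAG Γ →* Multiplicative ℤ)
    (hconn' : (Γ.induce {v : V | p (raagGen Γ v) ≠ 1}).Connected)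
    (hstar : ∀ v : V, p (raagGen Γ v) ≠ 1 ∨
      ∃ u : V, p (raagGen Γ u) ≠ 1 ∧ Γ.Adj v u) :
    Subgroup.FG p.ker ∧
    ∀ T : Set (RAAG Γ), T.Finite → T ⊆ (p.ker : Set (RAAG Γ)) →
      Subgroup.closure T = p.ker →
      Dominated (distortion (Set.range (raagGen Γ)) T p.ker) (fun n => n ^ 2) :=
  stmt3_general Γ p hconn' hstar
end

section
/- Let A₁ and A₂ be finitely generated groups, let G = A₁ × A₂, and let p : G → ℤ be a group homomorphism whose restrictions to A₁ × {1} and to {1} × A₂ are both surjective onto ℤ. Then the kernel N₁ = ker p is finitely generated and its distortion in G is linear: there is a finite generating set T of N₁, a finite generating set S of G, and a constant K such that every h ∈ N₁ with |h|_S ≤ n satisfies |h|_T ≤ (K+1)n. -/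
/-!
Pick `a₀ ∈ A₁`, `b₀ ∈ A₂` with `p (a₀, 1) = p (1, b₀) = 1` (additively). The maps
`a ↦ (a, b₀ ^ -p(a, 1))` and `b ↦ (a₀ ^ -p(1, b), b)` are homomorphisms `A₁ → ker p` and
`A₂ → ker p`, and every `(x, y) ∈ ker p` is the product of the image of `x` and the image of
`b₀ ^ p(x, 1) * y`. Homomorphisms sending generators to generators do not increase word length,
and `|p(x, 1)| ≤ M |x|` when `M` bounds `|p(a, 1)|` on the generators of `A₁`. Hence the images
of the generators of `A₁` and `A₂` generate `ker p`, with `|h|_T ≤ (M + 2) |h|_S`.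
-/

open Subgroup

section WordLength

variable {G H : Type*} [Group G] [Group H] {S : Set G} {g g' : G}

lemma exists_list_prod_eq_of_mem_closure (hg : g ∈ closure S) :
    ∃ l : List G, (∀ x ∈ l, x ∈ S ∨ x⁻¹ ∈ S) ∧ l.prod = g := by
  rw [← mem_toSubmonoid, closure_toSubmonoid] at hg
  exact Submonoid.exists_list_of_mem_closure hg

lemma exists_list_length_eq_wordLength (hg : g ∈ closure S) :
    ∃ l : List G, l.length = wordLength S g ∧ (∀ x ∈ l, x ∈ S ∨ x⁻¹ ∈ S) ∧ l.prod = g := by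
  obtain ⟨l, hl, hprod⟩ := exists_list_prod_eq_of_mem_closure hg
  exact Nat.sInf_mem
    (s := {n | ∃ l : List G, l.length = n ∧ (∀ x ∈ l, x ∈ S ∨ x⁻¹ ∈ S) ∧ l.prod = g})
    ⟨l.length, l, rfl, hl, hprod⟩

lemma wordLength_le_length {l : List G} (hl : ∀ x ∈ l, x ∈ S ∨ x⁻¹ ∈ S) (hprod : l.prod = g) :
    wordLength S g ≤ l.length :=
  Nat.sInf_le ⟨l, rfl, hl, hprod⟩

lemma wordLength_mul_le (hg : g ∈ closure S) (hg' : g' ∈ closure S) :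
    wordLength S (g * g') ≤ wordLength S g + wordLength S g' := by
  obtain ⟨l, hlen, hl, rfl⟩ := exists_list_length_eq_wordLength hg
  obtain ⟨l', hlen', hl', rfl⟩ := exists_list_length_eq_wordLength hg'
  rw [← hlen, ← hlen', ← List.length_append]
  exact wordLength_le_length (fun x hx => (List.mem_append.mp hx).elim (hl x) (hl' x))
    List.prod_append

lemma wordLength_zpow_le {s : G} (hs : s ∈ S) (k : ℤ) : wordLength S (s ^ k) ≤ k.natAbs := by
  obtain ⟨n, rfl | rfl⟩ := Int.eq_nat_or_neg k
  · calc wordLength S (s ^ (n : ℤ)) ≤ (List.replicate n s).length :=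
          wordLength_le_length (fun x hx => .inl (List.eq_of_mem_replicate hx ▸ hs)) (by simp)
      _ = _ := by simp
  · calc wordLength S (s ^ (-n : ℤ)) ≤ (List.replicate n s⁻¹).length :=
          wordLength_le_length (fun x hx => .inr (by rwa [List.eq_of_mem_replicate hx, inv_inv]))
            (by simp [zpow_neg])
      _ = _ := by simp

lemma map_mem_closure_of_mapsTo (f : G →* H) {T : Set H} (hf : Set.MapsTo f S T)
    (hg : g ∈ closure S) : f g ∈ closure T :=
  closure_mono hf.image_subset (MonoidHom.map_closure f S ▸ mem_map_of_mem f hg)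

lemma wordLength_map_le (f : G →* H) {T : Set H} (hf : Set.MapsTo f S T) (hg : g ∈ closure S) :
    wordLength T (f g) ≤ wordLength S g := by
  obtain ⟨l, hlen, hl, rfl⟩ := exists_list_length_eq_wordLength hg
  calc wordLength T (f l.prod) ≤ (l.map f).length := by
        refine wordLength_le_length ?_ (map_list_prod f l).symm
        simp only [List.mem_map, forall_exists_index, and_imp, forall_apply_eq_imp_iff₂]
        exact fun x hx => (hl x hx).imp (fun h => hf h) (fun h => map_inv f x ▸ hf h)
    _ = wordLength S l.prod := by rw [List.length_map, hlen]

lemma natAbs_toAdd_le_mul_wordLength (φ : G →* Multiplicative ℤ) {M : ℕ}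
    (hM : ∀ s ∈ S, (φ s).toAdd.natAbs ≤ M) (hg : g ∈ closure S) :
    (φ g).toAdd.natAbs ≤ M * wordLength S g := by
  obtain ⟨l, hlen, hl, rfl⟩ := exists_list_length_eq_wordLength hg
  rw [← hlen]
  clear hlen hg
  induction l with
  | nil => simp
  | cons x l ih =>
    have hx : (φ x).toAdd.natAbs ≤ M := by
      rcases hl x List.mem_cons_self with h | h
      · exact hM x h
      · simpa using hM _ h
    have hl := ih fun y hy => hl y (List.mem_cons_of_mem x hy)
    have := Int.natAbs_add_le (φ x).toAdd (φ l.prod).toAdd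
    simp only [List.prod_cons, map_mul, toAdd_mul, List.length_cons, mul_add_one]
    omega

end WordLength

section ProductKernel

variable {A₁ A₂ : Type*} [Group A₁] [Group A₂] (p : A₁ × A₂ →* Multiplicative ℤ)

lemma apply_mk_eq_mul (a : A₁) (b : A₂) : p (a, b) = p (a, 1) * p (1, b) := by
  rw [← map_mul, Prod.mk_mul_mk, mul_one, one_mul]

def kerLiftLeft (b₀ : A₂) : A₁ →* A₁ × A₂ :=
  (MonoidHom.id A₁).prod ((zpowersHom A₂ b₀⁻¹).comp (p.comp (MonoidHom.inl A₁ A₂)))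

def kerLiftRight (a₀ : A₁) : A₂ →* A₁ × A₂ :=
  ((zpowersHom A₁ a₀⁻¹).comp (p.comp (MonoidHom.inr A₁ A₂))).prod (MonoidHom.id A₂)

@[simp]
lemma kerLiftLeft_apply (b₀ : A₂) (a : A₁) :
    kerLiftLeft p b₀ a = (a, b₀⁻¹ ^ (p (a, 1)).toAdd) := rfl

@[simp]
lemma kerLiftRight_apply (a₀ : A₁) (b : A₂) :
    kerLiftRight p a₀ b = (a₀⁻¹ ^ (p (1, b)).toAdd, b) := rfl

variable {p} {a₀ : A₁} {b₀ : A₂}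

lemma kerLiftLeft_mem_ker (hb₀ : p (1, b₀) = .ofAdd 1) (a : A₁) : kerLiftLeft p b₀ a ∈ p.ker := by
  rw [MonoidHom.mem_ker, kerLiftLeft_apply, apply_mk_eq_mul,
    show ((1 : A₁), b₀⁻¹ ^ (p (a, 1)).toAdd) = (1, b₀) ^ (-(p (a, 1)).toAdd) by simp [zpow_neg],
    map_zpow, hb₀]
  apply Multiplicative.toAdd.injective
  simp

lemma kerLiftRight_mem_ker (ha₀ : p (a₀, 1) = .ofAdd 1) (b : A₂) : kerLiftRight p a₀ b ∈ p.ker := by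
  rw [MonoidHom.mem_ker, kerLiftRight_apply, apply_mk_eq_mul,
    show (a₀⁻¹ ^ (p (1, b)).toAdd, (1 : A₂)) = (a₀, 1) ^ (-(p (1, b)).toAdd) by simp [zpow_neg],
    map_zpow, ha₀]
  apply Multiplicative.toAdd.injective
  simp

lemma eq_kerLiftLeft_mul_kerLiftRight (hb₀ : p (1, b₀) = .ofAdd 1) {h : A₁ × A₂}
    (hh : h ∈ p.ker) :
    h = kerLiftLeft p b₀ h.1 * kerLiftRight p a₀ (b₀ ^ (p (h.1, 1)).toAdd * h.2) := by
  have hz : p (1, b₀ ^ (p (h.1, 1)).toAdd * h.2) = 1 := by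
    have hpow : p (1, b₀) ^ (p (h.1, 1)).toAdd = p (h.1, 1) := by
      rw [hb₀]
      apply Multiplicative.toAdd.injective
      simp
    rw [show ((1 : A₁), b₀ ^ (p (h.1, 1)).toAdd * h.2) = (1, b₀) ^ (p (h.1, 1)).toAdd * (1, h.2) by
      simp, map_mul, map_zpow, hpow, ← apply_mk_eq_mul]
    exact hh
  ext
  · simp [hz]
  · simp

lemma closure_kerLift_eq_ker (ha₀ : p (a₀, 1) = .ofAdd 1) (hb₀ : p (1, b₀) = .ofAdd 1)
    {U₁ : Set A₁} {U₂ : Set A₂} (hU₁ : closure U₁ = ⊤) (hU₂ : closure U₂ = ⊤) :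
    closure (kerLiftLeft p b₀ '' U₁ ∪ kerLiftRight p a₀ '' U₂) = p.ker := by
  refine le_antisymm (closure_le _ |>.mpr ?_) fun h hh => ?_
  · rintro _ (⟨a, -, rfl⟩ | ⟨b, -, rfl⟩)
    exacts [kerLiftLeft_mem_ker hb₀ a, kerLiftRight_mem_ker ha₀ b]
  · rw [eq_kerLiftLeft_mul_kerLiftRight hb₀ hh]
    exact mul_mem
      (map_mem_closure_of_mapsTo _ (fun a ha => .inl ⟨a, ha, rfl⟩) (hU₁ ▸ mem_top _))
      (map_mem_closure_of_mapsTo _ (fun b hb => .inr ⟨b, hb, rfl⟩) (hU₂ ▸ mem_top _))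

lemma wordLength_kerLift_le (hb₀ : p (1, b₀) = .ofAdd 1) {U₁ : Set A₁} {U₂ : Set A₂}
    {S : Set (A₁ × A₂)} (hS₁ : Set.MapsTo Prod.fst S U₁) (hS₂ : Set.MapsTo Prod.snd S U₂)
    (hb₀U : b₀ ∈ U₂) {M : ℕ} (hM : ∀ a ∈ U₁, (p (a, 1)).toAdd.natAbs ≤ M)
    {h : A₁ × A₂} (hh : h ∈ p.ker) (hS : h ∈ closure S) :
    wordLength (kerLiftLeft p b₀ '' U₁ ∪ kerLiftRight p a₀ '' U₂) h ≤ (M + 2) * wordLength S h := by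
  set T := kerLiftLeft p b₀ '' U₁ ∪ kerLiftRight p a₀ '' U₂
  set k := (p (h.1, 1)).toAdd
  have hLT : Set.MapsTo (kerLiftLeft p b₀) U₁ T := fun a ha => .inl ⟨a, ha, rfl⟩
  have hRT : Set.MapsTo (kerLiftRight p a₀) U₂ T := fun b hb => .inr ⟨b, hb, rfl⟩
  have hx : h.1 ∈ closure U₁ := map_mem_closure_of_mapsTo (MonoidHom.fst A₁ A₂) hS₁ hS
  have hy : h.2 ∈ closure U₂ := map_mem_closure_of_mapsTo (MonoidHom.snd A₁ A₂) hS₂ hS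
  have hb₀k : b₀ ^ k ∈ closure U₂ := zpow_mem (subset_closure hb₀U) k
  have hk : k.natAbs ≤ M * wordLength U₁ h.1 :=
    natAbs_toAdd_le_mul_wordLength (p.comp (MonoidHom.inl A₁ A₂)) hM hx
  have hxS : wordLength U₁ h.1 ≤ wordLength S h := wordLength_map_le (MonoidHom.fst A₁ A₂) hS₁ hS
  have hyS : wordLength U₂ h.2 ≤ wordLength S h := wordLength_map_le (MonoidHom.snd A₁ A₂) hS₂ hS
  calc wordLength T h
      = wordLength T (kerLiftLeft p b₀ h.1 * kerLiftRight p a₀ (b₀ ^ k * h.2)) := by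
        rw [← eq_kerLiftLeft_mul_kerLiftRight hb₀ hh]
    _ ≤ wordLength U₁ h.1 + wordLength U₂ (b₀ ^ k * h.2) :=
        (wordLength_mul_le (map_mem_closure_of_mapsTo _ hLT hx)
          (map_mem_closure_of_mapsTo _ hRT (mul_mem hb₀k hy))).trans
        (add_le_add (wordLength_map_le _ hLT hx) (wordLength_map_le _ hRT (mul_mem hb₀k hy)))
    _ ≤ wordLength U₁ h.1 + (k.natAbs + wordLength U₂ h.2) := by
        gcongr
        exact (wordLength_mul_le hb₀k hy).trans (by gcongr; exact wordLength_zpow_le hb₀U k)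
    _ ≤ (M + 1) * wordLength S h + wordLength S h := by
        linarith [Nat.mul_le_mul_left M hxS]
    _ = (M + 2) * wordLength S h := by ring

end ProductKernel

theorem stmt6 {A₁ A₂ : Type*} [Group A₁] [Group A₂]
    (h1 : Group.FG A₁) (h2 : Group.FG A₂)
    (p : A₁ × A₂ →* Multiplicative ℤ)
    (hs1 : Function.Surjective fun a : A₁ => p (a, 1))
    (hs2 : Function.Surjective fun b : A₂ => p (1, b)) :
    Subgroup.FG p.ker ∧
    ∃ (S T : Set (A₁ × A₂)) (K : ℕ),
      S.Finite ∧ Subgroup.closure S = ⊤ ∧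
      T.Finite ∧ T ⊆ (p.ker : Set (A₁ × A₂)) ∧ Subgroup.closure T = p.ker ∧
      ∀ (n : ℕ) (h : A₁ × A₂), h ∈ p.ker → wordLength S h ≤ n →
        wordLength T h ≤ (K + 1) * n := by
  obtain ⟨s₁, hs₁, hs₁fin⟩ := Group.fg_iff.mp h1
  obtain ⟨s₂, hs₂, hs₂fin⟩ := Group.fg_iff.mp h2
  obtain ⟨a₀, ha₀⟩ := hs1 (.ofAdd 1)
  obtain ⟨b₀, hb₀⟩ := hs2 (.ofAdd 1)
  set U₁ : Set A₁ := insert 1 s₁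
  set U₂ : Set A₂ := insert 1 (insert b₀ s₂)
  have hU₁fin : U₁.Finite := hs₁fin.insert 1
  have hU₂fin : U₂.Finite := (hs₂fin.insert b₀).insert 1
  have hU₁ : closure U₁ = ⊤ := top_unique (hs₁ ▸ closure_mono (Set.subset_insert _ _))
  have hU₂ : closure U₂ = ⊤ :=
    top_unique (hs₂ ▸ closure_mono ((Set.subset_insert _ _).trans (Set.subset_insert _ _)))
  have hS : closure (U₁ ×ˢ U₂) = ⊤ := by
    rw [closure_prod (Set.mem_insert 1 _) (Set.mem_insert 1 _), hU₁, hU₂, top_prod_top]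
  have hT := closure_kerLift_eq_ker ha₀ hb₀ hU₁ hU₂
  have hTfin := (hU₁fin.image (kerLiftLeft p b₀)).union (hU₂fin.image (kerLiftRight p a₀))
  obtain ⟨M, hM⟩ := (hU₁fin.image fun a => (p (a, 1)).toAdd.natAbs).bddAbove
  refine ⟨(fg_iff _).mpr ⟨_, hT, hTfin⟩, U₁ ×ˢ U₂, _, M + 1, hU₁fin.prod hU₂fin, hS, hTfin,
    fun t ht => hT ▸ subset_closure ht, hT, fun n h hh hn => ?_⟩
  exact (wordLength_kerLift_le hb₀ (fun _ hs => hs.1) (fun _ hs => hs.2)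
    (Set.mem_insert_of_mem 1 (Set.mem_insert b₀ s₂)) (fun a ha => hM ⟨a, ha, rfl⟩) hh
    (hS ▸ mem_top h)).trans (Nat.mul_le_mul_left _ hn)
end

section
/- Let Γ be the finite simplicial graph with vertex set {b, a₁, a₂, a₃, a₄} whose edges are a₁a₂, a₂a₃, a₃a₄, and ba_i for i = 1, 2, 3, 4. Let p : A_Γ → ℤ be the group homomorphism mapping each a_i to 1 and b to 0, and let N = ker p. Then the distortion of N in A_Γ is quadratic, i.e. Dist_{A_Γ}^N ∼ n². (In particular, the divergence of A_Γ is linear while the distortion of the normal subgroup N is quadratic, so group divergence and normal subgroup distortion are not equivalent in general.) -/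
/-- `f ∼ g`. -/
def FEquiv (f g : ℕ → ℕ) : Prop := Dominated f g ∧ Dominated g f

/-- The graph with vertices `b = 0`, `a₁ = 1`, …, `a₄ = 4` and edges
`a₁a₂, a₂a₃, a₃a₄` and `b aᵢ` for `i = 1, 2, 3, 4`. -/
def Γ7 : SimpleGraph (Fin 5) :=
  SimpleGraph.fromRel (fun i j => i = 0 ∨ (1 ≤ i.val ∧ i.val + 1 = j.val))

/-!
The kernel `N` is generated by `T0 = {b, x, y, z}`, where `x = a₁a₂⁻¹`, `y = a₂a₃⁻¹`,
`z = a₃a₄⁻¹`. As `a₁ᵉ = xᵉa₂ᵉ`, conjugation by `a₁ᵉ` agrees with conjugation by `xᵉ` on elements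
commuting with `a₂`; iterating, `a₁ᵉ z a₁⁻ᵉ = xᵉyᵉ z y⁻ᵉx⁻ᵉ`, so conjugating `T0` by `a₁ᵉ` costs
`O(|e|)` letters of `T0`. A word `s₁ ⋯ sᵣ` representing an element of `N` is the product of the
conjugates `a₁^{eᵢ₋₁} sᵢ a₁^{-eᵢ}` with `eᵢ = p(s₁ ⋯ sᵢ)` and `|eᵢ| ≤ r`, which gives the
quadratic upper bound.

For the lower bound, killing `b` maps `A_Γ` to `F(x, y, z) ⋊ ℤ` by `aᵢ ↦ wᵢ t` with
`w₁ = xyz`, `w₂ = yz`, `w₃ = z`, `w₄ = 1`; the relations of the path `a₁a₂a₃a₄` force the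
automorphism `σ` through which `t` acts. This map `ρ` sends `b, x, y, z` to `1, x, y, z`, so the
`T0`-length of `g` bounds the free length of `ρ g`. The staircase `(a₁z)ⁿa₁⁻ⁿ` has length `4n`
and is sent to `∏_{m ≤ n} xᵐyᵐ z y⁻ᵐx⁻ᵐ`, whose reduced word has length `n² + 4n`.

Word lengths for two finite generating sets of `N` are bi-Lipschitz, so both bounds pass from
`T0` to any finite generating set `T`.
-/

section WordLength

variable {G H : Type*} [Group G] [Group H]

def WordLengthLE (S : Set G) (g : G) (n : ℕ) : Prop :=
  ∃ l : List G, l.length ≤ n ∧ (∀ x ∈ l, x ∈ S ∨ x⁻¹ ∈ S) ∧ l.prod = g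

variable {S : Set G} {d g h : G} {m n : ℕ}

theorem wordLengthLE_wordLength (hg : g ∈ Subgroup.closure S) :
    WordLengthLE S g (wordLength S g) := by
  have hg' : g ∈ Submonoid.closure (S ∪ S⁻¹) := by rwa [← Subgroup.closure_toSubmonoid]
  obtain ⟨l, hl, rfl⟩ := Submonoid.exists_list_of_mem_closure hg'
  have hne : {n | ∃ l' : List G, l'.length = n ∧ (∀ x ∈ l', x ∈ S ∨ x⁻¹ ∈ S) ∧
      l'.prod = l.prod}.Nonempty :=
    ⟨l.length, l, rfl, fun x hx => (hl x hx).imp id Set.mem_inv.1, rfl⟩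
  obtain ⟨l', hlen, hS, hprod⟩ := Nat.sInf_mem hne
  exact ⟨l', hlen.le, hS, hprod⟩

namespace WordLengthLE

theorem wordLength_le (hg : WordLengthLE S g n) : wordLength S g ≤ n := by
  obtain ⟨l, hl, hS, rfl⟩ := hg
  exact le_trans (Nat.sInf_le ⟨l, rfl, hS, rfl⟩) hl

theorem mono (hg : WordLengthLE S g m) (hmn : m ≤ n) : WordLengthLE S g n :=
  let ⟨l, hl, hS, hprod⟩ := hg
  ⟨l, hl.trans hmn, hS, hprod⟩

theorem one : WordLengthLE S 1 0 := ⟨[], le_rfl, by simp, rfl⟩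

theorem of_mem {s : G} (hs : s ∈ S) : WordLengthLE S s 1 :=
  ⟨[s], le_rfl, by simp [hs], by simp⟩

theorem mul (hg : WordLengthLE S g m) (hh : WordLengthLE S h n) :
    WordLengthLE S (g * h) (m + n) := by
  obtain ⟨l, hl, hS, rfl⟩ := hg
  obtain ⟨l', hl', hS', rfl⟩ := hh
  refine ⟨l ++ l', by simp only [List.length_append]; omega, fun x hx => ?_, List.prod_append⟩
  exact (List.mem_append.1 hx).elim (hS x) (hS' x)

theorem inv (hg : WordLengthLE S g n) : WordLengthLE S g⁻¹ n := by
  obtain ⟨l, hl, hS, rfl⟩ := hg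
  refine ⟨(l.map (·⁻¹)).reverse, by simpa using hl, fun x hx => ?_, ?_⟩
  · obtain ⟨y, hy, rfl⟩ := List.mem_map.1 (List.mem_reverse.1 hx)
    simpa [or_comm] using hS y hy
  · exact (List.prod_inv_reverse l).symm

theorem pow (hg : WordLengthLE S g n) (k : ℕ) : WordLengthLE S (g ^ k) (n * k) := by
  induction k with
  | zero => simpa using one
  | succ k ih => simpa [pow_succ, Nat.mul_succ] using ih.mul hg

theorem zpow (hg : WordLengthLE S g n) (k : ℤ) : WordLengthLE S (g ^ k) (n * k.natAbs) := by
  obtain ⟨k, rfl | rfl⟩ := Int.eq_nat_or_neg k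
  · simpa using hg.pow k
  · simpa using (hg.pow k).inv

theorem conj (hd : WordLengthLE S d m) (hg : WordLengthLE S g n) :
    WordLengthLE S (MulAut.conj d g) (m + n + m) := by
  simpa using (hd.mul hg).mul hd.inv

theorem mem_closure (hg : WordLengthLE S g n) : g ∈ Subgroup.closure S := by
  obtain ⟨l, -, hS, rfl⟩ := hg
  refine list_prod_mem fun x hx => ?_
  exact (hS x hx).elim (Subgroup.subset_closure ·)
    fun h => inv_inv x ▸ inv_mem (Subgroup.subset_closure h)

theorem induction_on {P : G → ℕ → Prop} (hg : WordLengthLE S g n) (one : P 1 0)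
    (letter_mul : ∀ s g n, (s ∈ S ∨ s⁻¹ ∈ S) → P g n → P (s * g) (n + 1))
    (mono : ∀ g m n, m ≤ n → P g m → P g n) : P g n := by
  obtain ⟨l, hl, hS, rfl⟩ := hg
  refine mono _ _ _ hl ?_
  induction l with
  | nil => exact one
  | cons s l ih =>
    exact letter_mul s _ _ (hS s List.mem_cons_self)
      (ih (by simp only [List.length_cons] at hl; omega) fun x hx => hS x (List.mem_cons_of_mem s hx))

theorem map (f : G →* H) {T : Set H} {K : ℕ} (hf : ∀ s ∈ S, WordLengthLE T (f s) K)
    (hg : WordLengthLE S g n) : WordLengthLE T (f g) (K * n) := by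
  refine hg.induction_on (P := fun g n => WordLengthLE T (f g) (K * n)) (by simpa using one)
    (fun s g n hs ih => ?_) fun g m n hmn ih => ih.mono (Nat.mul_le_mul_left K hmn)
  have hs' : WordLengthLE T (f s) K := hs.elim (hf s) fun h => by simpa using (hf _ h).inv
  simpa [Nat.mul_succ, add_comm] using hs'.mul ih

theorem exists_norm_le {α : Type*} [DecidableEq α] (f : G →* H) (ι : FreeGroup α →* H)
    (hS : ∀ s ∈ S, ∃ w, f s = ι w ∧ w.norm ≤ 1) (hg : WordLengthLE S g n) :
    ∃ w, f g = ι w ∧ w.norm ≤ n := by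
  refine hg.induction_on (P := fun g n => ∃ w, f g = ι w ∧ w.norm ≤ n)
    ⟨1, by simp, by simp⟩ (fun s g n hs ⟨w, hw, hn⟩ => ?_)
    fun g m n hmn ⟨w, hw, hm⟩ => ⟨w, hw, hm.trans hmn⟩
  obtain ⟨v, hv, hv1⟩ : ∃ v, f s = ι v ∧ v.norm ≤ 1 := hs.elim (hS s) fun hs' => by
    obtain ⟨v, hv, hv1⟩ := hS _ hs'
    exact ⟨v⁻¹, by rw [map_inv, ← hv, map_inv, inv_inv], by rwa [FreeGroup.norm_inv_eq]⟩
  refine ⟨v * w, by rw [map_mul, hv, hw, map_mul], ?_⟩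
  exact (FreeGroup.norm_mul_le v w).trans (by omega)

end WordLengthLE

theorem exists_wordLength_le_mul {S T : Set G} (hS : S.Finite)
    (hST : S ⊆ Subgroup.closure T) :
    ∃ K, ∀ g ∈ Subgroup.closure S, wordLength T g ≤ K * wordLength S g := by
  refine ⟨hS.toFinset.sup (wordLength T), fun g hg => ?_⟩
  refine ((wordLengthLE_wordLength hg).map (MonoidHom.id G) fun s hs => ?_).wordLength_le
  exact (wordLengthLE_wordLength (hST hs)).mono (Finset.le_sup (hS.mem_toFinset.2 hs))

end WordLength

section Distortion

variable {G : Type*} [Group G] {S T : Set G} {H : Subgroup G}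

theorem distortion_le {r B : ℕ}
    (hB : ∀ h ∈ H, wordLength S h ≤ r → wordLength T h ≤ B) :
    distortion S T H r ≤ B :=
  csSup_le ⟨_, 1, H.one_mem, WordLengthLE.one.wordLength_le.trans r.zero_le, rfl⟩
    fun _ ⟨h, hH, hS, hT⟩ => hT ▸ hB h hH hS

theorem wordLength_le_distortion {r B : ℕ}
    (hB : ∀ h ∈ H, wordLength S h ≤ r → wordLength T h ≤ B) {h : G} (hH : h ∈ H)
    (hS : wordLength S h ≤ r) : wordLength T h ≤ distortion S T H r :=
  le_csSup ⟨B, fun _ ⟨h', hH', hS', hT'⟩ => hT' ▸ hB h' hH' hS'⟩ ⟨h, hH, hS, rfl⟩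

theorem fEquiv_distortion_sq {A C : ℕ}
    (hupper : ∀ h ∈ H, wordLength T h ≤ A * wordLength S h ^ 2 + C * wordLength S h)
    {w : ℕ → G} {B c : ℕ} (hB : 0 < B) (hwH : ∀ n, w n ∈ H)
    (hwS : ∀ n, wordLength S (w n) ≤ B * n) (hwT : ∀ n, n ^ 2 ≤ c * wordLength T (w n)) :
    FEquiv (distortion S T H) (· ^ 2) := by
  have hball : ∀ r, ∀ h ∈ H, wordLength S h ≤ r → wordLength T h ≤ A * r ^ 2 + C * r :=
    fun r h hH hS => (hupper h hH).trans (by gcongr)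
  refine ⟨⟨A + 1, 1, C + 1, 0, by omega, one_pos, by omega, fun r _ => ?_⟩,
    ⟨c + 1, B, 1, 0, by omega, hB, one_pos, fun n _ => ?_⟩⟩
  · calc distortion S T H r ≤ A * r ^ 2 + C * r := distortion_le (hball r)
      _ ≤ (A + 1) * (1 * r) ^ 2 + (C + 1) * r := by gcongr <;> omega
  · calc n ^ 2 ≤ c * wordLength T (w n) := hwT n
      _ ≤ c * distortion S T H (B * n) :=
        Nat.mul_le_mul_left c (wordLength_le_distortion (hball _) (hwH n) (hwS n))
      _ ≤ (c + 1) * distortion S T H (B * n) + 1 * n :=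
        le_add_right (Nat.mul_le_mul_right _ c.le_succ)

end Distortion

theorem commute_raagGen {V : Type*} {Γ : SimpleGraph V} {u v : V} (h : Γ.Adj u v) :
    Commute (raagGen Γ u) (raagGen Γ v) := by
  rw [← commutatorElement_eq_one_iff_commute]
  exact (QuotientGroup.eq_one_iff _).2 (Subgroup.subset_normalClosure ⟨u, v, h, rfl⟩)

def raagLift {V G : Type*} [Group G] {Γ : SimpleGraph V} (f : V → G)
    (hf : ∀ u v, Γ.Adj u v → Commute (f u) (f v)) : RAAG Γ →* G :=
  PresentedGroup.toGroup (f := f) <| by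
    rintro _ ⟨u, v, huv, rfl⟩
    simp [(hf u v huv).eq]

@[simp]
theorem raagLift_raagGen {V G : Type*} [Group G] {Γ : SimpleGraph V} (f : V → G)
    (hf : ∀ u v, Γ.Adj u v → Commute (f u) (f v)) (v : V) :
    raagLift f hf (raagGen Γ v) = f v :=
  PresentedGroup.toGroup.of _

theorem Commute.zpow_eq_mul_inv_zpow_mul_zpow {G : Type*} [Group G] {a b : G}
    (h : Commute a b) (e : ℤ) : a ^ e = (a * b⁻¹) ^ e * b ^ e := by
  rw [h.inv_right.mul_zpow, inv_zpow, inv_mul_cancel_right]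

theorem MulAut.conj_mul_zpow_of_commute {G : Type*} [Group G] {c g : G} (h : Commute c g)
    (d : G) (e : ℤ) : MulAut.conj (d * c ^ e) g = MulAut.conj d g := by
  simp only [MulAut.conj_apply, mul_inv_rev, mul_assoc, (h.zpow_left e).eq,
    mul_inv_cancel_left]

theorem FreeGroup.mk_replicate {α : Type*} (a : α × Bool) (n : ℕ) :
    FreeGroup.mk (List.replicate n a) = FreeGroup.mk [a] ^ n := by
  rw [FreeGroup.pow_mk, List.flatten_replicate_singleton]

namespace Γ7

open Multiplicative SemidirectProduct

abbrev a (i : Fin 5) : RAAG Γ7 := raagGen Γ7 i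

def x : RAAG Γ7 := a 1 * (a 2)⁻¹
def y : RAAG Γ7 := a 2 * (a 3)⁻¹
def z : RAAG Γ7 := a 3 * (a 4)⁻¹

def T0 : Set (RAAG Γ7) := {a 0, x, y, z}

theorem T0_finite : T0.Finite := by simp [T0]

theorem commute_a {i j : Fin 5} (h : Γ7.Adj i j := by simp [Γ7]) : Commute (a i) (a j) :=
  commute_raagGen h

def height : RAAG Γ7 →* Multiplicative ℤ :=
  raagLift (fun i => ofAdd (if i = 0 then 0 else 1)) fun _ _ _ => Commute.all _ _

theorem toAdd_height_a (i : Fin 5) : toAdd (height (a i)) = if i = 0 then 0 else 1 := by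
  simp [height]

theorem eq_height {p : RAAG Γ7 →* Multiplicative ℤ} (hp0 : p (raagGen Γ7 0) = 1)
    (hpa : ∀ i : Fin 5, i ≠ 0 → p (raagGen Γ7 i) = ofAdd 1) : p = height :=
  PresentedGroup.ext fun i => by
    change p (a i) = height (a i)
    by_cases hi : i = 0
    · subst hi; exact hp0.trans (by simp [height])
    · exact (hpa i hi).trans (by simp [height, hi])

theorem T0_subset_ker : T0 ⊆ height.ker := by
  simp [T0, Set.insert_subset_iff, x, y, z, height]

theorem commute_a_mul_inv {i j : Fin 5} (h : Γ7.Adj i j := by simp [Γ7]) :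
    Commute (a i) (a i * (a j)⁻¹) :=
  (Commute.refl _).mul_right (commute_a h).inv_right

theorem a1_zpow (e : ℤ) : a 1 ^ e = x ^ e * a 2 ^ e :=
  (commute_a : Commute (a 1) (a 2)).zpow_eq_mul_inv_zpow_mul_zpow e

theorem a2_zpow (e : ℤ) : a 2 ^ e = y ^ e * a 3 ^ e :=
  (commute_a : Commute (a 2) (a 3)).zpow_eq_mul_inv_zpow_mul_zpow e

theorem conj_a1_zpow_x (e : ℤ) : MulAut.conj (a 1 ^ e) x = x := by
  rw [← one_mul (a 1 ^ e), MulAut.conj_mul_zpow_of_commute (g := x) commute_a_mul_inv, map_one,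
    MulAut.one_apply]

theorem conj_a1_zpow_y (e : ℤ) : MulAut.conj (a 1 ^ e) y = MulAut.conj (x ^ e) y := by
  rw [a1_zpow]
  exact MulAut.conj_mul_zpow_of_commute (g := y) commute_a_mul_inv _ e

theorem conj_a1_zpow_z (e : ℤ) : MulAut.conj (a 1 ^ e) z = MulAut.conj (x ^ e * y ^ e) z := by
  rw [a1_zpow, a2_zpow, ← mul_assoc]
  exact MulAut.conj_mul_zpow_of_commute (g := z) commute_a_mul_inv _ e

theorem wordLengthLE_conj_a1_zpow_of_mem (e : ℤ) {t : RAAG Γ7} (ht : t ∈ T0) :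
    WordLengthLE T0 (MulAut.conj (a 1 ^ e) t) (4 * e.natAbs + 1) := by
  have hx : WordLengthLE T0 x 1 := .of_mem (by simp [T0])
  have hy : WordLengthLE T0 y 1 := .of_mem (by simp [T0])
  have hz : WordLengthLE T0 z 1 := .of_mem (by simp [T0])
  rcases ht with rfl | rfl | rfl | rfl
  · rw [MulAut.conj_apply, ((commute_a : Commute (a 1) (a 0)).zpow_left e).eq,
      mul_inv_cancel_right]
    exact (WordLengthLE.of_mem (by simp [T0])).mono (by omega)
  · rw [conj_a1_zpow_x]
    exact hx.mono (by omega)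
  · rw [conj_a1_zpow_y]
    exact ((hx.zpow e).conj hy).mono (by omega)
  · rw [conj_a1_zpow_z]
    exact (((hx.zpow e).mul (hy.zpow e)).conj hz).mono (by omega)

theorem wordLengthLE_conj_a1_zpow {g : RAAG Γ7} {n : ℕ} (hg : WordLengthLE T0 g n) (e : ℤ) :
    WordLengthLE T0 (MulAut.conj (a 1 ^ e) g) ((4 * e.natAbs + 1) * n) :=
  hg.map (MulAut.conj (a 1 ^ e)).toMonoidHom fun _ ht => wordLengthLE_conj_a1_zpow_of_mem e ht

theorem wordLengthLE_a_mul_a1_zpow (i : Fin 5) :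
    WordLengthLE T0 (a i * a 1 ^ (-toAdd (height (a i)))) 3 := by
  have hb : WordLengthLE T0 (a 0) 1 := .of_mem (by simp [T0])
  have hx : WordLengthLE T0 x 1 := .of_mem (by simp [T0])
  have hy : WordLengthLE T0 y 1 := .of_mem (by simp [T0])
  have hz : WordLengthLE T0 z 1 := .of_mem (by simp [T0])
  rw [toAdd_height_a]
  fin_cases i
  · simpa using hb.mono (by omega)
  · simpa using WordLengthLE.one.mono (by omega)
  · convert hx.inv.mono (by omega : 1 ≤ 3) using 1
    simp [x]
  · convert (hx.mul hy).inv.mono (by omega : 2 ≤ 3) using 1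
    simp [x, y]
  · convert ((hx.mul hy).mul hz).inv using 1
    simp [x, y, z]

theorem natAbs_toAdd_height_le_one {s : RAAG Γ7}
    (hs : s ∈ Set.range (raagGen Γ7) ∨ s⁻¹ ∈ Set.range (raagGen Γ7)) :
    (toAdd (height s)).natAbs ≤ 1 := by
  rcases hs with ⟨i, rfl⟩ | ⟨i, hi⟩
  · rw [toAdd_height_a]; split_ifs <;> simp
  · rw [← inv_inv s, ← hi, map_inv, toAdd_inv, Int.natAbs_neg, toAdd_height_a]
    split_ifs <;> simp

theorem wordLengthLE_a1_zpow_mul_letter {s : RAAG Γ7}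
    (hs : s ∈ Set.range (raagGen Γ7) ∨ s⁻¹ ∈ Set.range (raagGen Γ7)) {e : ℤ} {k : ℕ}
    (hk : e.natAbs + 1 ≤ k) :
    WordLengthLE T0 (a 1 ^ e * s * a 1 ^ (-(e + toAdd (height s)))) ((4 * k + 1) * 3) := by
  rcases hs with ⟨i, rfl⟩ | ⟨i, hi⟩
  · refine WordLengthLE.mono ?_ (by gcongr; omega : (4 * e.natAbs + 1) * 3 ≤ _)
    convert wordLengthLE_conj_a1_zpow (wordLengthLE_a_mul_a1_zpow i) e using 1
    simp only [MulAut.conj_apply]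
    group
  · obtain rfl : s = (a i)⁻¹ := inv_eq_iff_eq_inv.mp hi.symm
    have hδ := natAbs_toAdd_height_le_one (s := a i) (Or.inl ⟨i, rfl⟩)
    refine WordLengthLE.mono ?_
      (by gcongr; omega : (4 * (e - toAdd (height (a i))).natAbs + 1) * 3 ≤ _)
    convert wordLengthLE_conj_a1_zpow (wordLengthLE_a_mul_a1_zpow i).inv
      (e - toAdd (height (a i))) using 1
    simp only [MulAut.conj_apply, map_inv, toAdd_inv]
    group

theorem wordLengthLE_a1_zpow_mul_mul_a1_zpow {g : RAAG Γ7} {n : ℕ}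
    (hg : WordLengthLE (Set.range (raagGen Γ7)) g n) {e : ℤ} {k : ℕ}
    (hk : e.natAbs + n ≤ k) :
    WordLengthLE T0 (a 1 ^ e * g * a 1 ^ (-(e + toAdd (height g)))) ((4 * k + 1) * 3 * n) := by
  refine hg.induction_on (P := fun g n => ∀ e : ℤ, e.natAbs + n ≤ k →
      WordLengthLE T0 (a 1 ^ e * g * a 1 ^ (-(e + toAdd (height g)))) ((4 * k + 1) * 3 * n))
    (fun e _ => by simpa using WordLengthLE.one) (fun s g n hs ih e hk => ?_)
    (fun g m n hmn ih e hk => (ih e (by omega)).mono (by gcongr)) e hk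
  have hδ := natAbs_toAdd_height_le_one hs
  convert (wordLengthLE_a1_zpow_mul_letter hs (by omega : e.natAbs + 1 ≤ k)).mul
    (ih (e + toAdd (height s)) (by omega)) using 1
  · simp only [map_mul, toAdd_mul]
    group
  · ring

theorem wordLengthLE_T0_of_mem_ker {h : RAAG Γ7} (hh : h ∈ height.ker) {n : ℕ}
    (hS : WordLengthLE (Set.range (raagGen Γ7)) h n) :
    WordLengthLE T0 h ((4 * n + 1) * 3 * n) := by
  simpa [MonoidHom.mem_ker.1 hh] using
    wordLengthLE_a1_zpow_mul_mul_a1_zpow hS (e := 0) (by simp)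

theorem closure_range_raagGen : Subgroup.closure (Set.range (raagGen Γ7)) = ⊤ :=
  PresentedGroup.closure_range_of _

theorem closure_T0 : Subgroup.closure T0 = height.ker := by
  refine le_antisymm ((Subgroup.closure_le _).2 T0_subset_ker) fun h hh => ?_
  have hS := wordLengthLE_wordLength (closure_range_raagGen ▸ Subgroup.mem_top h)
  exact (wordLengthLE_T0_of_mem_ker hh hS).mem_closure

theorem wordLength_T0_le {h : RAAG Γ7} (hh : h ∈ height.ker) :
    wordLength T0 h ≤ 12 * wordLength (Set.range (raagGen Γ7)) h ^ 2 +
      3 * wordLength (Set.range (raagGen Γ7)) h := by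
  have hS := wordLengthLE_wordLength (closure_range_raagGen ▸ Subgroup.mem_top h)
  exact (wordLengthLE_T0_of_mem_ker hh hS).wordLength_le.trans_eq (by ring)

abbrev F3 := FreeGroup (Fin 3)

def fx : F3 := .of 0
def fy : F3 := .of 1
def fz : F3 := .of 2

def σ : MulAut F3 := by
  refine MonoidHom.toMulEquiv
    (FreeGroup.lift ![(fy * fz)⁻¹ * fx * (fy * fz), fz⁻¹ * fy * fz, fz])
    (FreeGroup.lift ![fz * fy * fx * (fz * fy)⁻¹, fz * fy * fz⁻¹, fz]) ?_ ?_ <;>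
  refine FreeGroup.ext_hom _ _ fun i => ?_ <;>
  fin_cases i <;>
  simp only [fx, fy, fz, Fin.zero_eta, Fin.mk_one, Fin.reduceFinMk, MonoidHom.comp_apply,
    MonoidHom.id_apply, FreeGroup.lift_apply_of, Matrix.cons_val_zero, Matrix.cons_val_one,
    Matrix.cons_val, map_mul, map_inv] <;>
  group

theorem σ_fx : σ fx = (fy * fz)⁻¹ * fx * (fy * fz) := by simp [σ, fx, fy, fz]

theorem σ_fy : σ fy = fz⁻¹ * fy * fz := by simp [σ, fy, fz]

theorem σ_fz : σ fz = fz := by simp [σ, fz]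

abbrev Q := F3 ⋊[zpowersHom (MulAut F3) σ] Multiplicative ℤ

def mulT (w : F3) : Q := inl w * inr (ofAdd 1)

theorem mulT_mul_mulT (u w : F3) : mulT u * mulT w = inl (u * σ w) * inr (ofAdd 2) := by
  have h : (inl (σ w) : Q) = inr (ofAdd 1) * inl w * inr (ofAdd 1)⁻¹ := by
    simpa using inl_aut (φ := zpowersHom (MulAut F3) σ) (ofAdd 1) w
  rw [mulT, mulT, map_mul, h]
  simp only [mul_assoc, ← map_mul]
  rfl

theorem commute_mulT {u w : F3} (h : u * σ w = w * σ u) : Commute (mulT u) (mulT w) := by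
  rw [Commute, SemiconjBy, mulT_mul_mulT, mulT_mul_mulT, h]

theorem mulT_mul_inv_mulT (u w : F3) : mulT u * (mulT w)⁻¹ = inl (u * w⁻¹) := by
  simp [mulT, mul_assoc]

def ρ : RAAG Γ7 →* Q :=
  raagLift ![1, mulT (fx * fy * fz), mulT (fy * fz), mulT fz, mulT 1] fun u v huv => by
    have h12 : Commute (mulT (fx * fy * fz)) (mulT (fy * fz)) :=
      commute_mulT (by simp only [map_mul, σ_fx, σ_fy, σ_fz]; group)
    have h23 : Commute (mulT (fy * fz)) (mulT fz) :=
      commute_mulT (by simp only [map_mul, σ_fy, σ_fz]; group)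
    have h34 : Commute (mulT fz) (mulT 1) := commute_mulT (by simp [σ_fz])
    fin_cases u <;> fin_cases v
    all_goals first
      | exact Commute.one_left _ | exact Commute.one_right _
      | exact h12 | exact h12.symm | exact h23 | exact h23.symm | exact h34 | exact h34.symm
      | exact absurd huv (by simp [Γ7])

theorem ρ_a0 : ρ (a 0) = 1 := by simp [ρ]

theorem ρ_x : ρ x = inl fx := by simp [x, ρ, mulT_mul_inv_mulT]

theorem ρ_y : ρ y = inl fy := by simp [y, ρ, mulT_mul_inv_mulT]

theorem ρ_z : ρ z = inl fz := by simp [z, ρ, mulT_mul_inv_mulT]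

theorem norm_le_wordLength_T0 {g : RAAG Γ7} {w : F3} (hg : g ∈ height.ker) (hw : ρ g = inl w) :
    w.norm ≤ wordLength T0 g := by
  rw [← closure_T0] at hg
  obtain ⟨v, hv, hn⟩ := (wordLengthLE_wordLength hg).exists_norm_le ρ inl fun t ht => by
    rcases ht with rfl | rfl | rfl | rfl
    · exact ⟨1, by simp [ρ_a0], by simp⟩
    · exact ⟨fx, ρ_x, (FreeGroup.norm_of _).le⟩
    · exact ⟨fy, ρ_y, (FreeGroup.norm_of _).le⟩
    · exact ⟨fz, ρ_z, (FreeGroup.norm_of _).le⟩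
  rwa [inl_injective (hw.symm.trans hv)]

def staircase (n : ℕ) : RAAG Γ7 := (a 1 * z) ^ n * (a 1 ^ n)⁻¹

def freeStaircase : ℕ → F3
  | 0 => 1
  | n + 1 => freeStaircase n * MulAut.conj (fx ^ (n + 1) * fy ^ (n + 1)) fz

theorem staircase_succ (n : ℕ) :
    staircase (n + 1) = staircase n * MulAut.conj (a 1 ^ ((n + 1 : ℕ) : ℤ)) z := by
  simp only [staircase, MulAut.conj_apply, zpow_natCast, pow_succ]
  group

theorem ρ_staircase (n : ℕ) : ρ (staircase n) = inl (freeStaircase n) := by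
  induction n with
  | zero => simp [staircase, freeStaircase]
  | succ n ih =>
    rw [staircase_succ, map_mul, ih, conj_a1_zpow_z, MulAut.conj_apply, freeStaircase,
      MulAut.conj_apply, map_mul (inl : F3 →* Q)]
    simp only [map_mul, map_inv, zpow_natCast, map_pow, ρ_x, ρ_y, ρ_z]

theorem staircase_mem_ker (n : ℕ) : staircase n ∈ height.ker := by
  simp [staircase, z, height]

theorem wordLength_staircase_le (n : ℕ) :
    wordLength (Set.range (raagGen Γ7)) (staircase n) ≤ 4 * n := by
  have ha (i : Fin 5) : WordLengthLE (Set.range (raagGen Γ7)) (a i) 1 := .of_mem ⟨i, rfl⟩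
  have h := (((ha 1).mul ((ha 3).mul (ha 4).inv)).pow n).mul ((ha 1).pow n).inv
  exact h.wordLength_le.trans (by omega)

def stairBlock (n : ℕ) : List (Fin 3 × Bool) :=
  List.replicate n (1, false) ++ [(0, true)] ++ List.replicate (n + 1) (1, true) ++ [(2, true)]

def stairWord : ℕ → List (Fin 3 × Bool)
  | 0 => []
  | n + 1 => stairWord n ++ stairBlock n

theorem mk_stairBlock (n : ℕ) :
    FreeGroup.mk (stairBlock n) = (fy ^ n)⁻¹ * fx * fy ^ (n + 1) * fz := by
  simp only [stairBlock, ← FreeGroup.mul_mk, FreeGroup.mk_replicate]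
  have hx : FreeGroup.mk [((0 : Fin 3), true)] = fx := rfl
  have hy : FreeGroup.mk [((1 : Fin 3), true)] = fy := rfl
  have hy' : FreeGroup.mk [((1 : Fin 3), false)] = fy⁻¹ := rfl
  have hz : FreeGroup.mk [((2 : Fin 3), true)] = fz := rfl
  rw [hx, hy, hy', hz, inv_pow]

theorem isReduced_stairBlock (n : ℕ) : FreeGroup.IsReduced (stairBlock n) := by
  simp [stairBlock, FreeGroup.IsReduced, List.isChain_append, List.isChain_replicate_of_rel,
    List.getLast?_replicate, List.head?_replicate, List.isChain_cons]

theorem ne_two_of_mem_head?_stairBlock {n : ℕ} {d : Fin 3 × Bool}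
    (hd : d ∈ (stairBlock n).head?) : d.1 ≠ 2 := by
  cases n <;> simp only [stairBlock, List.replicate_succ, List.replicate_zero, List.cons_append,
    List.nil_append, List.head?_cons, Option.mem_def, Option.some.injEq] at hd <;> subst hd <;>
    decide

theorem isReduced_stairWord (n : ℕ) :
    FreeGroup.IsReduced (stairWord n) ∧ ∀ c ∈ (stairWord n).getLast?, c = (2, true) := by
  induction n with
  | zero => simp [stairWord, FreeGroup.IsReduced.nil]
  | succ n ih =>
    refine ⟨List.isChain_append.2 ⟨ih.1, isReduced_stairBlock n, fun c hc d hd hcd => ?_⟩,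
      fun c hc => ?_⟩
    · obtain rfl := ih.2 c hc
      exact absurd hcd.symm (ne_two_of_mem_head?_stairBlock hd)
    · rw [stairWord, stairBlock, ← List.append_assoc, List.getLast?_concat] at hc
      exact (Option.mem_some_iff.1 hc).symm

theorem length_stairWord (n : ℕ) : (stairWord n).length = n ^ 2 + 2 * n := by
  induction n with
  | zero => rfl
  | succ n ih =>
    simp only [stairWord, stairBlock, List.length_append, List.length_replicate, List.length_cons,
      List.length_nil, ih]
    ring

theorem mk_stairWord (n : ℕ) :
    FreeGroup.mk (stairWord n) = freeStaircase n * (fx ^ n * fy ^ n) := by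
  induction n with
  | zero => rfl
  | succ n ih =>
    rw [stairWord, ← FreeGroup.mul_mk, ih, mk_stairBlock, freeStaircase, MulAut.conj_apply]
    group

theorem sq_le_norm_freeStaircase (n : ℕ) : n ^ 2 ≤ (freeStaircase n).norm := by
  have h := FreeGroup.norm_mul_le (freeStaircase n) (fx ^ n * fy ^ n)
  rw [← mk_stairWord, FreeGroup.norm, FreeGroup.toWord_mk, (isReduced_stairWord n).1.reduce_eq,
    length_stairWord] at h
  have hpow : (fx ^ n * fy ^ n).norm ≤ 2 * n := (FreeGroup.norm_mul_le _ _).trans <| by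
    rw [fx, fy, FreeGroup.norm_of_pow, FreeGroup.norm_of_pow]; omega
  omega

theorem sq_le_wordLength_T0_staircase (n : ℕ) : n ^ 2 ≤ wordLength T0 (staircase n) :=
  (sq_le_norm_freeStaircase n).trans
    (norm_le_wordLength_T0 (staircase_mem_ker n) (ρ_staircase n))

end Γ7

open Γ7 in
theorem stmt7 (p : RAAG Γ7 →* Multiplicative ℤ)
    (hp0 : p (raagGen Γ7 0) = 1)
    (hpa : ∀ i : Fin 5, i ≠ 0 → p (raagGen Γ7 i) = Multiplicative.ofAdd 1) :
    Subgroup.FG p.ker ∧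
    ∀ T : Set (RAAG Γ7), T.Finite → T ⊆ (p.ker : Set (RAAG Γ7)) →
      Subgroup.closure T = p.ker →
      FEquiv (distortion (Set.range (raagGen Γ7)) T p.ker) (fun n => n ^ 2) := by
  obtain rfl := eq_height hp0 hpa
  refine ⟨⟨T0_finite.toFinset, by simpa using closure_T0⟩, fun T hT _ hTker => ?_⟩
  obtain ⟨K, hK⟩ := exists_wordLength_le_mul T0_finite
    ((closure_T0.trans hTker.symm) ▸ Subgroup.subset_closure)
  obtain ⟨K', hK'⟩ := exists_wordLength_le_mul hT
    ((hTker.trans closure_T0.symm) ▸ Subgroup.subset_closure)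
  refine fEquiv_distortion_sq (A := K * 12) (C := K * 3) (c := K') (fun h hh => ?_) four_pos
    staircase_mem_ker wordLength_staircase_le fun n => ?_
  · calc wordLength T h ≤ K * wordLength T0 h := hK h (closure_T0 ▸ hh)
      _ ≤ K * (12 * wordLength _ h ^ 2 + 3 * wordLength _ h) :=
        Nat.mul_le_mul_left K (wordLength_T0_le hh)
      _ = _ := by ring
  · calc n ^ 2 ≤ wordLength T0 (staircase n) := sq_le_wordLength_T0_staircase n
      _ ≤ K' * wordLength T (staircase n) := hK' _ (hTker ▸ staircase_mem_ker n)
end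

section
/- Let F_d be the free group freely generated by the set S = {x₁, …, x_d}, and let Φ_d be the automorphism of F_d sending x₁ to x₁ and x_i to x_i x_{i-1}^{-1} for 2 ≤ i ≤ d. Then for every i with 1 ≤ i ≤ d and every positive integer n, the word length of Φ_d^n(x_i) with respect to S satisfies |Φ_d^n(x_i)|_S ≤ 2 n^{i-1}. -/
/-- The predecessor index (`0`-indexed version of `i ↦ i - 1`). -/
def fpred {d : ℕ} (i : Fin d) : Fin d :=
  ⟨i.val - 1, lt_of_le_of_lt (Nat.sub_le _ _) i.isLt⟩

namespace WordLength

variable {G : Type*} [Group G] {S : Set G}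

def lengths (S : Set G) (g : G) : Set ℕ :=
  {n | ∃ l : List G, l.length = n ∧ (∀ x ∈ l, x ∈ S ∨ x⁻¹ ∈ S) ∧ l.prod = g}

theorem eq_sInf_lengths (g : G) : wordLength S g = sInf (lengths S g) := rfl

theorem le_length {g : G} (l : List G) (hl : ∀ x ∈ l, x ∈ S ∨ x⁻¹ ∈ S) (hg : l.prod = g) :
    wordLength S g ≤ l.length :=
  Nat.sInf_le ⟨l, rfl, hl, hg⟩

theorem le_one_of_mem {x : G} (hx : x ∈ S) : wordLength S x ≤ 1 :=
  le_length [x] (by simp [hx]) (by simp)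

theorem exists_list_of_mem_closure {g : G} (hg : g ∈ Subgroup.closure S) :
    ∃ l : List G, l.length = wordLength S g ∧ (∀ x ∈ l, x ∈ S ∨ x⁻¹ ∈ S) ∧ l.prod = g := by
  have hg' : g ∈ Submonoid.closure (S ∪ S⁻¹) := by
    rw [← Subgroup.closure_toSubmonoid]
    exact hg
  obtain ⟨l, hl, hprod⟩ := Submonoid.exists_list_of_mem_closure hg'
  exact Nat.sInf_mem (s := lengths S g) ⟨l.length, l, rfl, hl, hprod⟩

theorem lengths_inv (g : G) : lengths S g⁻¹ = lengths S g := by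
  suffices key : ∀ h : G, lengths S h ⊆ lengths S h⁻¹ by
    exact le_antisymm (by simpa using key g⁻¹) (key g)
  rintro h n ⟨l, rfl, hl, rfl⟩
  refine ⟨(l.map (·⁻¹)).reverse, by simp, ?_, by simp [List.prod_inv_reverse]⟩
  simp only [List.mem_reverse, List.mem_map]
  rintro _ ⟨x, hx, rfl⟩
  simpa [or_comm] using hl x hx

theorem inv (g : G) : wordLength S g⁻¹ = wordLength S g := by
  rw [eq_sInf_lengths, eq_sInf_lengths, lengths_inv]

theorem mul_le (hS : Subgroup.closure S = ⊤) (a b : G) :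
    wordLength S (a * b) ≤ wordLength S a + wordLength S b := by
  obtain ⟨la, hla, ha, rfl⟩ := exists_list_of_mem_closure (hS ▸ Subgroup.mem_top a)
  obtain ⟨lb, hlb, hb, rfl⟩ := exists_list_of_mem_closure (hS ▸ Subgroup.mem_top b)
  calc wordLength S (la.prod * lb.prod) ≤ (la ++ lb).length :=
        le_length _ (fun x hx => (List.mem_append.1 hx).elim (ha x) (hb x)) List.prod_append
    _ = _ := by rw [List.length_append, hla, hlb]

end WordLength

namespace MulAut

variable {G : Type*} [Group G] {Φ : MulAut G}

theorem pow_apply_of_apply_eq {x : G} (hx : Φ x = x) (n : ℕ) : (Φ ^ n) x = x := by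
  induction n with
  | zero => rfl
  | succ n ih => rw [pow_succ, mul_apply, hx, ih]

theorem pow_succ_apply_of_apply_eq_mul_inv {x y : G} (hx : Φ x = x * y⁻¹) (n : ℕ) :
    (Φ ^ (n + 1)) x = (Φ ^ n) x * ((Φ ^ n) y)⁻¹ := by
  rw [pow_succ, mul_apply, hx, map_mul, map_inv]

end MulAut

theorem Nat.pow_succ_add_pow_le_succ_pow (n k : ℕ) : n ^ (k + 1) + n ^ k ≤ (n + 1) ^ (k + 1) :=
  calc n ^ (k + 1) + n ^ k = (n + 1) * n ^ k := by ring
    _ ≤ (n + 1) * (n + 1) ^ k := Nat.mul_le_mul_left _ (Nat.pow_le_pow_left n.le_succ k)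
    _ = (n + 1) ^ (k + 1) := by ring

open WordLength in
theorem wordLength_pow_succ_apply_le {G : Type*} [Group G] {S : Set G}
    (hS : Subgroup.closure S = ⊤) {Φ : MulAut G} {x y : G} (hx : Φ x = x * y⁻¹)
    (hx1 : wordLength S x ≤ 1) (hy1 : wordLength S y ≤ 1) {k : ℕ}
    (hy : ∀ n, wordLength S ((Φ ^ (n + 1)) y) ≤ 2 * (n + 1) ^ k) (n : ℕ) :
    wordLength S ((Φ ^ (n + 1)) x) ≤ 2 * (n + 1) ^ (k + 1) := by
  induction n with
  | zero =>
    rw [MulAut.pow_succ_apply_of_apply_eq_mul_inv hx]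
    calc wordLength S (x * y⁻¹) ≤ wordLength S x + wordLength S y := by
          simpa only [inv] using mul_le hS x y⁻¹
      _ ≤ 2 * (0 + 1) ^ (k + 1) := by simp only [zero_add, one_pow]; omega
  | succ n ih =>
    rw [MulAut.pow_succ_apply_of_apply_eq_mul_inv hx]
    calc _ ≤ wordLength S ((Φ ^ (n + 1)) x) + wordLength S ((Φ ^ (n + 1)) y) := by
          simpa only [inv] using mul_le hS ((Φ ^ (n + 1)) x) ((Φ ^ (n + 1)) y)⁻¹
      _ ≤ 2 * ((n + 1) ^ (k + 1) + (n + 1) ^ k) := by have := hy n; omega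
      _ ≤ 2 * (n + 1 + 1) ^ (k + 1) :=
          Nat.mul_le_mul_left 2 (Nat.pow_succ_add_pow_le_succ_pow (n + 1) k)

/-- With `x₁, …, x_d` indexed by `Fin d` (so `x_{i+1}` is `FreeGroup.of i`), if
`Φ` is the automorphism with `Φ(x₁) = x₁` and `Φ(x_i) = x_i x_{i-1}⁻¹` for `i ≥ 2`,
then `|Φ^n(x_i)|_S ≤ 2 n^{i-1}`. -/
theorem stmt10 (d : ℕ) (Φ : MulAut (FreeGroup (Fin d)))
    (hΦ : ∀ i : Fin d, Φ (FreeGroup.of i) =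
      if i.val = 0 then FreeGroup.of i
      else FreeGroup.of i * (FreeGroup.of (fpred i))⁻¹) :
    ∀ (i : Fin d) (n : ℕ), 0 < n →
      wordLength (Set.range (FreeGroup.of : Fin d → FreeGroup (Fin d)))
        ((Φ ^ n) (FreeGroup.of i)) ≤ 2 * n ^ i.val := by
  have hS := FreeGroup.closure_range_of (Fin d)
  have hof (i : Fin d) := WordLength.le_one_of_mem (Set.mem_range_self (f := FreeGroup.of) i)
  suffices key : ∀ k (i : Fin d), i.val = k → ∀ n,
      wordLength (Set.range FreeGroup.of) ((Φ ^ (n + 1)) (FreeGroup.of i)) ≤ 2 * (n + 1) ^ k by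
    intro i n hn
    obtain ⟨n, rfl⟩ := Nat.exists_eq_add_one_of_ne_zero hn.ne'
    exact key i.val i rfl n
  intro k
  induction k with
  | zero =>
    intro i hi n
    rw [MulAut.pow_apply_of_apply_eq (by rw [hΦ i, if_pos hi])]
    exact (hof i).trans (by simp)
  | succ k ih =>
    rintro i hi
    have hpred : (fpred i).val = k := by simp [fpred, hi]
    exact wordLength_pow_succ_apply_le hS (by rw [hΦ i, if_neg (by omega)]) (hof i)
      (hof (fpred i)) (ih (fpred i) hpred)
end

section
/- Let F_d be the free group freely generated by the set S = {x₁, …, x_d}, and let Ψ_d be the automorphism of F_d sending x_i to x_i x_{i-1} ⋯ x₁ for each 1 ≤ i ≤ d. Then for every i with 1 ≤ i ≤ d and every positive integer n, the word length of Ψ_d^n(x_i) with respect to S satisfies |Ψ_d^n(x_i)|_S ≤ i · n^{i-1}. -/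
/-- The word `x_i x_{i-1} ⋯ x₁` (with `x₁, …, x_d` indexed by `Fin d`, so that
`x_{i+1}` is `FreeGroup.of i`). -/
def descProd (d : ℕ) (i : Fin d) : FreeGroup (Fin d) :=
  (List.ofFn fun k : Fin (i.val + 1) =>
    FreeGroup.of (⟨i.val - k.val, lt_of_le_of_lt (Nat.sub_le _ _) i.isLt⟩ : Fin d)).prod

lemma sumBound (n : ℕ) : ∀ i : ℕ,
    (∑ j ∈ Finset.range (i + 1), (j + 1) * n ^ j) ≤ (i + 1) * (n + 1) ^ i := by
  intro i
  induction i with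
  | zero => simp
  | succ i ih =>
    rw [Finset.sum_range_succ]
    have h1 : n ^ (i + 1) ≤ n * (n + 1) ^ i := by
      rw [pow_succ']
      exact Nat.mul_le_mul_left n (Nat.pow_le_pow_left (Nat.le_succ n) i)
    calc (∑ j ∈ Finset.range (i + 1), (j + 1) * n ^ j) + (i + 1 + 1) * n ^ (i + 1)
        ≤ (i + 1) * (n + 1) ^ i + (i + 2) * (n * (n + 1) ^ i) :=
          Nat.add_le_add ih (Nat.mul_le_mul_left _ h1)
      _ = ((i + 1) + (i + 2) * n) * (n + 1) ^ i := by ring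
      _ ≤ ((i + 2) * (n + 1)) * (n + 1) ^ i := by
          apply Nat.mul_le_mul_right
          nlinarith
      _ = (i + 1 + 1) * (n + 1) ^ (i + 1) := by ring

lemma key (d : ℕ) (Ψ : MulAut (FreeGroup (Fin d)))
    (hΨ : ∀ i : Fin d, Ψ (FreeGroup.of i) = descProd d i) :
    ∀ n : ℕ, 1 ≤ n → ∀ i : Fin d, ∃ l : List (FreeGroup (Fin d)),
      (∀ x ∈ l, x ∈ Set.range (FreeGroup.of : Fin d → FreeGroup (Fin d))) ∧
      l.prod = (Ψ ^ n) (FreeGroup.of i) ∧ l.length ≤ (i.val + 1) * n ^ i.val := by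
  intro n hn
  induction n, hn using Nat.le_induction with
  | base =>
    intro i
    refine ⟨List.ofFn fun k : Fin (i.val + 1) =>
      FreeGroup.of (⟨i.val - k.val, lt_of_le_of_lt (Nat.sub_le _ _) i.isLt⟩ : Fin d), ?_, ?_, ?_⟩
    · intro x hx
      simp only [List.mem_ofFn, Set.mem_range] at hx ⊢
      obtain ⟨k, hk⟩ := hx
      exact ⟨_, hk⟩
    · rw [pow_one, hΨ]; rfl
    · simp
  | succ n hn ih =>
    intro i
    choose L h1 h2 h3 using ih
    refine ⟨(List.ofFn fun k : Fin (i.val + 1) =>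
      L (⟨i.val - k.val, lt_of_le_of_lt (Nat.sub_le _ _) i.isLt⟩ : Fin d)).flatten, ?_, ?_, ?_⟩
    · intro x hx
      simp only [List.mem_flatten, List.mem_ofFn] at hx
      obtain ⟨l, ⟨k, hk⟩, hxl⟩ := hx
      exact h1 _ x (hk ▸ hxl)
    · rw [List.prod_flatten, List.map_ofFn]
      have : ((Ψ : FreeGroup (Fin d) ≃* FreeGroup (Fin d)) ^ (n + 1)) (FreeGroup.of i)
          = (Ψ ^ n) (Ψ (FreeGroup.of i)) := by
        rw [pow_succ]; rfl
      rw [this, hΨ, descProd, map_list_prod (Ψ ^ n), List.map_ofFn]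
      exact congrArg List.prod (congrArg List.ofFn (funext fun k => h2 _))
    · rw [List.length_flatten]
      calc ((List.ofFn fun k : Fin (i.val + 1) =>
            L (⟨i.val - k.val, lt_of_le_of_lt (Nat.sub_le _ _) i.isLt⟩ : Fin d)).map
              List.length).sum
          ≤ ∑ k : Fin (i.val + 1), (i.val - k.val + 1) * n ^ (i.val - k.val) := by
            rw [List.map_ofFn, List.sum_ofFn]
            exact Finset.sum_le_sum fun k _ => h3 _
        _ = ∑ k ∈ Finset.range (i.val + 1), (i.val - k + 1) * n ^ (i.val - k) := by
            rw [Fin.sum_univ_eq_sum_range (fun k => (i.val - k + 1) * n ^ (i.val - k))]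
        _ = ∑ j ∈ Finset.range (i.val + 1), (j + 1) * n ^ j := by
            rw [← Finset.sum_range_reflect (fun j => (j + 1) * n ^ j) (i.val + 1)]
            simp
        _ ≤ (i.val + 1) * (n + 1) ^ i.val := sumBound n i.val

/-- If `Ψ` is the automorphism with `Ψ(x_i) = x_i x_{i-1} ⋯ x₁` for all `i`,
then `|Ψ^n(x_i)|_S ≤ i · n^{i-1}`. -/
theorem stmt11 (d : ℕ) (Ψ : MulAut (FreeGroup (Fin d)))
    (hΨ : ∀ i : Fin d, Ψ (FreeGroup.of i) = descProd d i) :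
    ∀ (i : Fin d) (n : ℕ), 0 < n →
      wordLength (Set.range (FreeGroup.of : Fin d → FreeGroup (Fin d)))
        ((Ψ ^ n) (FreeGroup.of i)) ≤ (i.val + 1) * n ^ i.val := by
  intro i n hn
  obtain ⟨l, hl1, hl2, hl3⟩ := key d Ψ hΨ n hn i
  have hmem : l.length ∈ {m | ∃ l' : List (FreeGroup (Fin d)), l'.length = m ∧
      (∀ x ∈ l', x ∈ Set.range (FreeGroup.of : Fin d → FreeGroup (Fin d)) ∨
        x⁻¹ ∈ Set.range (FreeGroup.of : Fin d → FreeGroup (Fin d))) ∧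
      l'.prod = (Ψ ^ n) (FreeGroup.of i)} :=
    ⟨l, rfl, fun x hx => Or.inl (hl1 x hx), hl2⟩
  exact le_trans (Nat.sInf_le hmem) hl3
end
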